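/- arXiv:1208.1607 — 6 statements merged into one kernel-verified Lean document; each statement's English description precedes it below -/
import Mathlib

section
/- Let m ≥ 2 and let A be an mth order 2-dimensional complex tensor. Let C = (C_i^j) be a real orthogonal 2×2 matrix (C C^T = I), and define the transformed tensor à by ã_{i_1...i_m} = Σ_{j_1,...,j_m} C_{i_1}^{j_1}···C_{i_m}^{j_m} a_{j_1...j_m}, with associated binary forms F̃_1, F̃_2 of degree m−1. Then Res(F̃_1, F̃_2) = Res(F_1, F_2). -/
open Finset

noncomputable section

/-- `(A x^{m-1})_i` for an `m`th order `n`-dimensional tensor; the tensor is given with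
its first index separated: `A i g` is the entry `a_{i, g 1, ..., g (m-1)}`. -/
def tApply {R : Type*} [CommRing R] {m1 n : ℕ} (A : Fin n → (Fin m1 → Fin n) → R)
    (x : Fin n → R) (i : Fin n) : R :=
  ∑ g : Fin m1 → Fin n, A i g * ∏ j, x (g j)

/-- `x^T x = ∑ i, x i ^ 2`. -/
def dotSq {R : Type*} [CommRing R] {n : ℕ} (x : Fin n → R) : R := ∑ i, x i ^ 2

/-- A tensor is regular if the system `A x^{m-1} = 0, x^T x = 0` has no nonzero solution. -/
def Regular {m1 n : ℕ} (A : Fin n → (Fin m1 → Fin n) → ℂ) : Prop :=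
  ¬∃ x : Fin n → ℂ, x ≠ 0 ∧ (∀ i, tApply A x i = 0) ∧ dotSq x = 0

/-- For `n = 2`: `bCoeff A 0 i = b_{i+1}` and `bCoeff A 1 i = c_{i+1}`, i.e. the coefficient
of `x₁^{m-1-i} x₂^i` in the binary form `F_{i0+1}(x) = (A x^{m-1})_{i0+1}`. -/
def bCoeff {R : Type*} [CommRing R] {m1 : ℕ} (A : Fin 2 → (Fin m1 → Fin 2) → R)
    (i0 : Fin 2) (i : ℕ) : R :=
  ∑ g ∈ univ.filter (fun g : Fin m1 → Fin 2 => (univ.filter fun k => g k = 1).card = i), A i0 g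

/-- The Sylvester matrix of binary forms of degrees `d` and `e` with coefficient
sequences `f` and `g` (`f i` is the coefficient of `x₁^{d-i} x₂^i`, similarly `g`):
the first `e` rows are shifted copies of `(f 0, ..., f d)`, the last `d` rows are
shifted copies of `(g 0, ..., g e)`. -/
def sylM {R : Type*} [CommRing R] (d e : ℕ) (f g : ℕ → R) :
    Matrix (Fin (d + e)) (Fin (d + e)) R := fun i j =>
  if (i : ℕ) < e then
    (if (i : ℕ) ≤ (j : ℕ) ∧ (j : ℕ) ≤ (i : ℕ) + d then f ((j : ℕ) - (i : ℕ)) else 0)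
  else
    (if (i : ℕ) - e ≤ (j : ℕ) ∧ (j : ℕ) ≤ ((i : ℕ) - e) + e then g ((j : ℕ) - ((i : ℕ) - e)) else 0)

/-- The resultant of binary forms of degrees `d` and `e`. -/
def Res {R : Type*} [CommRing R] (d e : ℕ) (f g : ℕ → R) : R := (sylM d e f g).det

/-!
Writing `F = (F₁, F₂)`, the transformed forms are `F̃ = C · (F ∘ Cᵀ)`. The Sylvester matrix
of two forms of degree `d` is the matrix of `(P, Q) ↦ P F₁ + Q F₂` on pairs of forms of
degree `d - 1`. Hence replacing `F` by `N · F` multiplies it on the left by `N ⊗ 1`, while the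
substitution `x ↦ Mᵀ x` intertwines it with the matrices of that substitution on forms of
degree `d - 1` and `2d - 1`. The substitution matrix on forms of degree `n - 1` has determinant
`det M ^ (n (n - 1) / 2)`: this is read off the diagonal for triangular `M` and propagates
through the decomposition of `M` into transvections and a diagonal matrix. Altogether
`Res(N · (F ∘ Mᵀ)) = det N ^ d * det M ^ (d²) * Res(F)`, and for orthogonal `C` the factor
`det C ^ (d (d + 1))` equals `1`.
-/

open MvPolynomial

section BinaryForm

variable {R : Type*} [CommRing R]

def binMon (k j : ℕ) : Fin 2 →₀ ℕ := Finsupp.single 0 (k - j) + Finsupp.single 1 j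

@[simp] lemma binMon_apply_zero (k j : ℕ) : binMon k j 0 = k - j := by simp [binMon]

@[simp] lemma binMon_apply_one (k j : ℕ) : binMon k j 1 = j := by simp [binMon]

lemma binMon_injective (k : ℕ) : Function.Injective (binMon k) := fun i j h => by
  simpa using DFunLike.congr_fun h 1

lemma finsupp_fin_two_eq_iff {m n : Fin 2 →₀ ℕ} : m = n ↔ m 0 = n 0 ∧ m 1 = n 1 := by
  simp [Finsupp.ext_iff, Fin.forall_fin_two]

lemma finsupp_fin_two_le_iff {m n : Fin 2 →₀ ℕ} : m ≤ n ↔ m 0 ≤ n 0 ∧ m 1 ≤ n 1 := by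
  simp [Finsupp.le_def, Fin.forall_fin_two]

lemma binMon_eq_iff {k j : ℕ} (hj : j ≤ k) {m : Fin 2 →₀ ℕ} :
    binMon k j = m ↔ m 1 = j ∧ m 0 + m 1 = k := by
  rw [finsupp_fin_two_eq_iff, binMon_apply_zero, binMon_apply_one]; omega

lemma degree_binMon {k j : ℕ} (h : j ≤ k) : (binMon k j).degree = k := by
  rw [Finsupp.degree_eq_sum, Fin.sum_univ_two, binMon_apply_zero, binMon_apply_one]; omega

lemma isHomogeneous_monomial_binMon {k i : ℕ} (hi : i ≤ k) (c : R) :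
    (monomial (binMon k i) c).IsHomogeneous k :=
  isHomogeneous_monomial _ (degree_binMon hi)

lemma monomial_binMon (k j : ℕ) (c : R) :
    monomial (binMon k j) c = C c * X 0 ^ (k - j) * X 1 ^ j := by
  simp [binMon, X_pow_eq_monomial, C_mul_monomial, monomial_mul]

def binaryForm (k : ℕ) (f : ℕ → R) : MvPolynomial (Fin 2) R :=
  ∑ j ∈ range (k + 1), monomial (binMon k j) (f j)

def formCoeff (k : ℕ) (P : MvPolynomial (Fin 2) R) (j : ℕ) : R := coeff (binMon k j) P

lemma coeff_binaryForm (k : ℕ) (f : ℕ → R) (m : Fin 2 →₀ ℕ) :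
    coeff m (binaryForm k f) = if m 0 + m 1 = k then f (m 1) else 0 := by
  rw [binaryForm, coeff_sum]
  simp only [coeff_monomial]
  split_ifs with hm
  · rw [Finset.sum_eq_single (m 1)]
    · rw [if_pos ((binMon_eq_iff (by omega)).2 ⟨rfl, hm⟩)]
    · intro j hj hne
      rw [if_neg fun h => hne ((binMon_eq_iff (by simp at hj; omega)).1 h).1.symm]
    · simp; omega
  · refine Finset.sum_eq_zero fun j hj => if_neg fun h => hm ?_
    exact ((binMon_eq_iff (by simp at hj; omega)).1 h).2

lemma binaryForm_formCoeff {k : ℕ} {P : MvPolynomial (Fin 2) R} (hP : P.IsHomogeneous k) :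
    binaryForm k (formCoeff k P) = P := by
  ext m
  rw [coeff_binaryForm]
  split_ifs with hm
  · rw [formCoeff, (binMon_eq_iff (by omega)).2 ⟨rfl, hm⟩]
  · refine (hP.coeff_eq_zero ?_).symm
    rwa [Finsupp.degree_eq_sum, Fin.sum_univ_two]

lemma formCoeff_monomial_mul_binaryForm {s t n k : ℕ} (c : R) (f : ℕ → R) (hts : t ≤ s)
    (hk : s + n = k) (j : ℕ) :
    formCoeff k (monomial (binMon s t) c * binaryForm n f) j =
      if t ≤ j ∧ j ≤ t + n then c * f (j - t) else 0 := by
  rw [formCoeff, coeff_monomial_mul', coeff_binaryForm]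
  simp only [finsupp_fin_two_le_iff, Finsupp.tsub_apply, binMon_apply_zero, binMon_apply_one]
  split_ifs <;> first | rfl | omega | exact mul_zero c

lemma linear_form_pow (a b : R) (n : ℕ) :
    (C a * X 0 + C b * X 1) ^ n = binaryForm n fun r => a ^ (n - r) * b ^ r * n.choose r := by
  rw [add_comm, add_pow, binaryForm]
  refine Finset.sum_congr rfl fun r _ => ?_
  rw [monomial_binMon, map_mul, map_mul, map_pow, map_pow, map_natCast]
  ring

end BinaryForm

section LinearSubstitution

variable {R σ : Type*} [CommRing R] [Fintype σ]

/-- `P ↦ P(Mᵀ x)`. -/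
def linSubst (M : Matrix σ σ R) : MvPolynomial σ R →ₐ[R] MvPolynomial σ R :=
  aeval fun t => ∑ s, C (M s t) * X s

lemma linSubst_X (M : Matrix σ σ R) (t : σ) : linSubst M (X t) = ∑ s, C (M s t) * X s :=
  aeval_X _ _

lemma linSubst_linSubst (M N : Matrix σ σ R) (P : MvPolynomial σ R) :
    linSubst M (linSubst N P) = linSubst (M * N) P := by
  rw [← AlgHom.comp_apply]
  congr 1
  refine algHom_ext fun t => ?_
  simp only [AlgHom.comp_apply, linSubst_X, map_sum, map_mul, algHom_C, algebraMap_eq,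
    Matrix.mul_apply, Finset.mul_sum, Finset.sum_mul]
  rw [Finset.sum_comm]
  exact sum_congr rfl fun r _ => sum_congr rfl fun s _ => by ring

lemma isHomogeneous_linSubst {P : MvPolynomial σ R} {k : ℕ} (hP : P.IsHomogeneous k)
    (M : Matrix σ σ R) : (linSubst M P).IsHomogeneous k := by
  have h := hP.aeval (fun t => ∑ s, C (M s t) * X s) fun t =>
    IsHomogeneous.sum _ _ _ fun s _ => isHomogeneous_C_mul_X (M s t) s
  rwa [one_mul] at h

end LinearSubstitution

section SubstMatrix

variable {R : Type*} [CommRing R]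

def substCoeff (M : Matrix (Fin 2) (Fin 2) R) (k i j : ℕ) : R :=
  formCoeff k (linSubst M (monomial (binMon k i) 1)) j

/-- The matrix of `linSubst M` on binary forms of degree `n - 1`, acting on coefficient rows,
so that `substMatrix n (M * N) = substMatrix n N * substMatrix n M`. -/
def substMatrix (n : ℕ) (M : Matrix (Fin 2) (Fin 2) R) : Matrix (Fin n) (Fin n) R :=
  Matrix.of fun i j => substCoeff M (n - 1) i j

@[simp] lemma substMatrix_apply (n : ℕ) (M : Matrix (Fin 2) (Fin 2) R) (i j : Fin n) :
    substMatrix n M i j = substCoeff M (n - 1) i j := rfl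

lemma formCoeff_linSubst {k : ℕ} {P : MvPolynomial (Fin 2) R} (hP : P.IsHomogeneous k)
    (M : Matrix (Fin 2) (Fin 2) R) (j : ℕ) :
    formCoeff k (linSubst M P) j =
      ∑ s ∈ range (k + 1), formCoeff k P s * substCoeff M k s j := by
  conv_lhs => rw [← binaryForm_formCoeff hP, binaryForm]
  rw [map_sum, formCoeff, coeff_sum]
  refine sum_congr rfl fun s _ => ?_
  rw [← mul_one (formCoeff k P s), ← C_mul_monomial, map_mul, algHom_C, algebraMap_eq,
    coeff_C_mul, mul_one]
  rfl

lemma substCoeff_mul (M N : Matrix (Fin 2) (Fin 2) R) {k i : ℕ} (hi : i ≤ k) (j : ℕ) :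
    substCoeff (M * N) k i j =
      ∑ s ∈ range (k + 1), substCoeff N k i s * substCoeff M k s j := by
  rw [substCoeff, ← linSubst_linSubst,
    formCoeff_linSubst (isHomogeneous_linSubst (isHomogeneous_monomial_binMon hi 1) N)]
  rfl

lemma substMatrix_mul (n : ℕ) (M N : Matrix (Fin 2) (Fin 2) R) :
    substMatrix n (M * N) = substMatrix n N * substMatrix n M := by
  ext i j
  rw [substMatrix_apply, substCoeff_mul _ _ (Nat.le_sub_one_of_lt i.isLt), Matrix.mul_apply,
    Nat.sub_add_cancel i.pos, Finset.sum_range]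
  rfl

lemma substCoeff_of_upper {M : Matrix (Fin 2) (Fin 2) R} (h : M 1 0 = 0) {k i : ℕ} (hi : i ≤ k)
    (j : ℕ) : substCoeff M k i j =
      if j ≤ i then M 0 0 ^ (k - i) * (M 0 1 ^ (i - j) * M 1 1 ^ j * i.choose j) else 0 := by
  have hsubst : linSubst M (monomial (binMon k i) 1) = monomial (binMon (k - i) 0) (M 0 0 ^ (k - i))
      * binaryForm i fun r => M 0 1 ^ (i - r) * M 1 1 ^ r * i.choose r := by
    rw [← linear_form_pow, monomial_binMon, monomial_binMon, map_one, one_mul, map_mul, map_pow,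
      map_pow, linSubst_X, linSubst_X, Fin.sum_univ_two, Fin.sum_univ_two, h, map_zero, zero_mul,
      add_zero, map_pow, Nat.sub_zero]
    ring
  rw [substCoeff, hsubst, formCoeff_monomial_mul_binaryForm _ _ (Nat.zero_le _)
    (Nat.sub_add_cancel hi)]
  simp

lemma substCoeff_of_lower {M : Matrix (Fin 2) (Fin 2) R} (h : M 0 1 = 0) {k i : ℕ} (hi : i ≤ k)
    (j : ℕ) : substCoeff M k i j = if i ≤ j ∧ j ≤ k then
      M 1 1 ^ i * (M 0 0 ^ (k - i - (j - i)) * M 1 0 ^ (j - i) * (k - i).choose (j - i))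
      else 0 := by
  have hsubst : linSubst M (monomial (binMon k i) 1) = monomial (binMon i i) (M 1 1 ^ i)
      * binaryForm (k - i) fun r => M 0 0 ^ (k - i - r) * M 1 0 ^ r * (k - i).choose r := by
    rw [← linear_form_pow, monomial_binMon, monomial_binMon, map_one, one_mul, map_mul, map_pow,
      map_pow, linSubst_X, linSubst_X, Fin.sum_univ_two, Fin.sum_univ_two, h, map_zero, zero_mul,
      zero_add, map_pow, Nat.sub_self, pow_zero]
    ring
  rw [substCoeff, hsubst, formCoeff_monomial_mul_binaryForm _ _ le_rfl (by omega),
    Nat.add_sub_cancel' hi]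

lemma prod_pow_rev_mul_pow (a d : R) (n : ℕ) :
    ∏ i : Fin n, a ^ (n - 1 - i) * d ^ (i : ℕ) = (a * d) ^ ∑ i ∈ range n, i := by
  rw [prod_mul_distrib, prod_pow_eq_pow_sum, prod_pow_eq_pow_sum, mul_pow,
    Fin.sum_univ_eq_sum_range (fun i => n - 1 - i), Fin.sum_univ_eq_sum_range (fun i => i),
    sum_range_reflect (fun i => i)]

lemma det_substMatrix_of_upper {M : Matrix (Fin 2) (Fin 2) R} (h : M 1 0 = 0) (n : ℕ) :
    (substMatrix n M).det = M.det ^ ∑ i ∈ range n, i := by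
  have hdiag (i : Fin n) : substMatrix n M i i = M 0 0 ^ (n - 1 - i) * M 1 1 ^ (i : ℕ) := by
    rw [substMatrix_apply, substCoeff_of_upper h (by omega), if_pos le_rfl]
    simp
  rw [Matrix.det_of_isLowerTriangular _ fun i j hij => ?_, Matrix.det_fin_two, h, mul_zero,
    sub_zero, ← prod_pow_rev_mul_pow]
  · exact prod_congr rfl fun i _ => hdiag i
  · rw [OrderDual.toDual_lt_toDual] at hij
    rw [substMatrix_apply, substCoeff_of_upper h (by omega), if_neg (by omega)]

lemma det_substMatrix_of_lower {M : Matrix (Fin 2) (Fin 2) R} (h : M 0 1 = 0) (n : ℕ) :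
    (substMatrix n M).det = M.det ^ ∑ i ∈ range n, i := by
  have hdiag (i : Fin n) : substMatrix n M i i = M 0 0 ^ (n - 1 - i) * M 1 1 ^ (i : ℕ) := by
    rw [substMatrix_apply, substCoeff_of_lower h (by omega), if_pos ⟨le_rfl, by omega⟩]
    simp [mul_comm]
  rw [Matrix.det_of_isUpperTriangular fun i j hij => ?_, Matrix.det_fin_two, h, zero_mul, sub_zero,
    ← prod_pow_rev_mul_pow]
  · exact prod_congr rfl fun i _ => hdiag i
  · rw [substMatrix_apply, substCoeff_of_lower h (by omega), if_neg fun h' => ?_]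
    exact absurd h'.1 (not_le.2 hij)

end SubstMatrix

lemma det_substMatrix {K : Type*} [Field K] (n : ℕ) (M : Matrix (Fin 2) (Fin 2) K) :
    (substMatrix n M).det = M.det ^ ∑ i ∈ range n, i := by
  induction M using Matrix.diagonal_transvection_induction with
  | hdiag D _ => exact det_substMatrix_of_upper (Matrix.diagonal_apply_ne _ (by decide)) n
  | htransvec t =>
    by_cases h : t.toMatrix 1 0 = 0
    · exact det_substMatrix_of_upper h n
    · refine det_substMatrix_of_lower ?_ n
      rcases t with ⟨i, j, hij, c⟩
      fin_cases i <;> fin_cases j <;> simp_all [Matrix.transvection]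
  | hmul A B hA hB =>
    rw [substMatrix_mul, Matrix.det_mul, Matrix.det_mul, hA, hB, mul_pow, mul_comm]

section Sylvester

variable {R : Type*} [CommRing R]

/-- Row `(a, i)` of the Sylvester matrix is row `i + d * a` of `sylM`. -/
def sylvesterIndex (d : ℕ) : Fin 2 × Fin d ≃ Fin (d + d) :=
  finProdFinEquiv.trans (finCongr (two_mul d))

lemma sylvesterIndex_val {d : ℕ} (p : Fin 2 × Fin d) :
    (sylvesterIndex d p : ℕ) = p.2 + d * p.1 := rfl

lemma sylM_sylvesterIndex {d : ℕ} (f : Fin 2 → ℕ → R) (a : Fin 2) (i : Fin d)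
    (j : Fin (d + d)) :
    sylM d d (f 0) (f 1) (sylvesterIndex d (a, i)) j =
      if (i : ℕ) ≤ j ∧ (j : ℕ) ≤ i + d then f a (j - i) else 0 := by
  fin_cases a
  · simp [sylM, sylvesterIndex_val]
  · have h : ¬ (i : ℕ) + d < d := by omega
    simp [sylM, sylvesterIndex_val, h]

def sylvesterMatrix (d : ℕ) (F : Fin 2 → MvPolynomial (Fin 2) R) :
    Matrix (Fin 2 × Fin d) (Fin 2 × Fin d) R :=
  Matrix.of fun p q =>
    formCoeff (d - 1 + d) (monomial (binMon (d - 1) p.2) 1 * F p.1) (sylvesterIndex d q)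

lemma det_sylM_formCoeff {d : ℕ} {F : Fin 2 → MvPolynomial (Fin 2) R}
    (hF : ∀ a, (F a).IsHomogeneous d) :
    (sylM d d (formCoeff d (F 0)) (formCoeff d (F 1))).det = (sylvesterMatrix d F).det := by
  have h : sylvesterMatrix d F =
      (sylM d d (formCoeff d (F 0)) (formCoeff d (F 1))).submatrix (sylvesterIndex d)
        (sylvesterIndex d) := by
    ext ⟨a, i⟩ q
    rw [Matrix.submatrix_apply, sylM_sylvesterIndex (fun a => formCoeff d (F a)), sylvesterMatrix,
      Matrix.of_apply]
    conv_lhs => rw [← binaryForm_formCoeff (hF a)]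
    rw [formCoeff_monomial_mul_binaryForm (1 : R) _ (Nat.le_sub_one_of_lt i.isLt) rfl]
    simp only [one_mul]
  rw [h, Matrix.det_submatrix_equiv_self]

open Kronecker

lemma sylvesterMatrix_mix (d : ℕ) (N : Matrix (Fin 2) (Fin 2) R)
    (F : Fin 2 → MvPolynomial (Fin 2) R) :
    sylvesterMatrix d (fun a => ∑ b, C (N a b) * F b) =
      (N ⊗ₖ (1 : Matrix (Fin d) (Fin d) R)) * sylvesterMatrix d F := by
  ext ⟨a, i⟩ q
  rw [Matrix.mul_apply, Fintype.sum_prod_type]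
  simp only [sylvesterMatrix, Matrix.of_apply, Matrix.kroneckerMap_apply, Matrix.one_apply,
    mul_ite, mul_one, mul_zero, ite_mul, zero_mul, Finset.sum_ite_eq, Finset.mem_univ, if_true,
    Finset.mul_sum, formCoeff, coeff_sum]
  refine sum_congr rfl fun b _ => ?_
  rw [mul_left_comm, coeff_C_mul]

lemma linSubst_monomial_binMon {n : ℕ} (M : Matrix (Fin 2) (Fin 2) R) (i : Fin n) :
    linSubst M (monomial (binMon (n - 1) i) 1) =
      ∑ r : Fin n, C (substMatrix n M i r) * monomial (binMon (n - 1) r) 1 := by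
  conv_lhs => rw [← binaryForm_formCoeff (isHomogeneous_linSubst
    (isHomogeneous_monomial_binMon (Nat.le_sub_one_of_lt i.isLt) 1) M)]
  rw [binaryForm, Nat.sub_add_cancel i.pos, Finset.sum_range]
  refine sum_congr rfl fun r _ => ?_
  rw [C_mul_monomial, mul_one]
  rfl

lemma sylvesterMatrix_linSubst (d : ℕ) (M : Matrix (Fin 2) (Fin 2) R)
    {F : Fin 2 → MvPolynomial (Fin 2) R} (hF : ∀ a, (F a).IsHomogeneous d) :
    ((1 : Matrix (Fin 2) (Fin 2) R) ⊗ₖ substMatrix d M) *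
        sylvesterMatrix d (fun a => linSubst M (F a)) =
      sylvesterMatrix d F *
        (substMatrix (d + d) M).submatrix (sylvesterIndex d) (sylvesterIndex d) := by
  ext ⟨a, i⟩ q
  have hd : d - 1 + d = d + d - 1 := by omega
  have hd1 := i.pos
  set P := monomial (binMon (d - 1) i) (1 : R) * F a
  have hP : P.IsHomogeneous (d - 1 + d) :=
    (isHomogeneous_monomial_binMon (Nat.le_sub_one_of_lt i.isLt) 1).mul (hF a)
  calc _ = ∑ r : Fin d, substMatrix d M i r * formCoeff (d - 1 + d)
          (monomial (binMon (d - 1) r) 1 * linSubst M (F a)) (sylvesterIndex d q) := by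
        rw [Matrix.mul_apply, Fintype.sum_prod_type]
        simp only [Matrix.kroneckerMap_apply, Matrix.one_apply, ite_mul, one_mul, zero_mul,
          Finset.sum_ite_irrel, Finset.sum_const_zero, Finset.sum_ite_eq, Finset.mem_univ, if_true,
          sylvesterMatrix, Matrix.of_apply]
    _ = formCoeff (d - 1 + d) (linSubst M P) (sylvesterIndex d q) := by
        rw [map_mul, linSubst_monomial_binMon, sum_mul, formCoeff, coeff_sum]
        refine sum_congr rfl fun r _ => ?_
        rw [mul_assoc, coeff_C_mul]
        rfl
    _ = _ := by
        rw [formCoeff_linSubst hP, Matrix.mul_apply]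
        simp only [sylvesterMatrix, Matrix.of_apply, Matrix.submatrix_apply, substMatrix_apply]
        rw [hd, Nat.sub_add_cancel (by omega), Finset.sum_range,
          ← Equiv.sum_comp (sylvesterIndex d)]

end Sylvester

lemma sum_range_add_self_id (d : ℕ) :
    ∑ i ∈ range (d + d), i = 2 * ∑ i ∈ range d, i + d * d := by
  rw [sum_range_add, sum_add_distrib, sum_const, card_range, smul_eq_mul]
  ring

open Kronecker in
theorem det_sylvesterMatrix_transform {K : Type*} [Field K] (d : ℕ)
    (N M : Matrix (Fin 2) (Fin 2) K) (hM : M.det ≠ 0) {F : Fin 2 → MvPolynomial (Fin 2) K}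
    (hF : ∀ a, (F a).IsHomogeneous d) :
    (sylvesterMatrix d fun a => ∑ b, C (N a b) * linSubst M (F b)).det =
      N.det ^ d * M.det ^ (d * d) * (sylvesterMatrix d F).det := by
  have hmix := congrArg Matrix.det (sylvesterMatrix_mix d N fun b => linSubst M (F b))
  have hsubst := congrArg Matrix.det (sylvesterMatrix_linSubst d M hF)
  rw [Matrix.det_mul, Matrix.det_kronecker, Matrix.det_one, one_pow, mul_one,
    Fintype.card_fin] at hmix
  rw [Matrix.det_mul, Matrix.det_mul, Matrix.det_kronecker, Matrix.det_one, one_pow, one_mul,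
    Fintype.card_fin, Matrix.det_submatrix_equiv_self, det_substMatrix, det_substMatrix,
    sum_range_add_self_id, pow_add, pow_mul] at hsubst
  have hne : (M.det ^ ∑ i ∈ range d, i) ^ 2 ≠ 0 := pow_ne_zero _ (pow_ne_zero _ hM)
  refine mul_left_cancel₀ hne ?_
  rw [hmix]
  linear_combination N.det ^ d * hsubst

section Tensor

variable {R σ : Type*} [CommRing R] [Fintype σ] {m1 : ℕ}

/-- The form `F_i(x) = (A x^{m-1})_i`. -/
def tensorForm (A : σ → (Fin m1 → σ) → R) (i : σ) : MvPolynomial σ R :=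
  ∑ g, C (A i g) * ∏ k, X (g k)

lemma isHomogeneous_tensorForm (A : σ → (Fin m1 → σ) → R) (i : σ) :
    (tensorForm A i).IsHomogeneous m1 := by
  refine IsHomogeneous.sum _ _ _ fun g _ => ?_
  have h := IsHomogeneous.prod univ (fun k => (X (g k) : MvPolynomial σ R)) (fun _ => 1)
    fun k _ => isHomogeneous_X R (g k)
  simpa using h.C_mul (A i g)

lemma tensorForm_transform (A At : σ → (Fin m1 → σ) → R) (M : Matrix σ σ R)
    (hAt : ∀ i g, At i g = ∑ j, ∑ h : Fin m1 → σ, (M i j * ∏ k, M (g k) (h k)) * A j h)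
    (i : σ) : tensorForm At i = ∑ j, C (M i j) * linSubst M (tensorForm A j) := by
  have hprod (h : Fin m1 → σ) : linSubst M (∏ k, X (h k)) =
      ∑ g : Fin m1 → σ, C (∏ k, M (g k) (h k)) * ∏ k, X (g k) := by
    simp only [map_prod, linSubst_X, prod_univ_sum, Fintype.piFinset_univ, prod_mul_distrib,
      map_prod]
  simp only [tensorForm, hAt, map_sum, map_mul, algHom_C, algebraMap_eq, hprod, mul_sum, sum_mul]
  rw [sum_comm]
  refine sum_congr rfl fun j _ => ?_
  rw [sum_comm]
  exact sum_congr rfl fun h _ => sum_congr rfl fun g _ => by ring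

end Tensor

lemma prod_X_eq_monomial_binMon {R : Type*} [CommRing R] {m1 : ℕ} (g : Fin m1 → Fin 2) :
    ∏ k, (X (g k) : MvPolynomial (Fin 2) R) = monomial (binMon m1 #{k | g k = 1}) 1 := by
  have hX (k : Fin m1) : (X (g k) : MvPolynomial (Fin 2) R) = monomial (Finsupp.single (g k) 1) 1 :=
    rfl
  simp_rw [hX, ← monomial_sum_one]
  congr 2
  have hcard := card_filter_add_card_filter_not (s := univ) fun k => g k = 1
  have hzero : #{k | g k = 0} = #{k | ¬ g k = 1} := by
    congr 1
    exact filter_congr fun k _ => by omega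
  rw [finsupp_fin_two_eq_iff]
  simp only [Finsupp.finsetSum_apply, Finsupp.single_apply, sum_boole, binMon_apply_zero,
    binMon_apply_one, Nat.cast_id, and_true]
  simp only [card_univ, Fintype.card_fin] at hcard
  rw [hzero]
  omega

lemma formCoeff_tensorForm {R : Type*} [CommRing R] {m1 : ℕ}
    (A : Fin 2 → (Fin m1 → Fin 2) → R) (i : Fin 2) :
    formCoeff m1 (tensorForm A i) = bCoeff A i := by
  ext j
  simp only [formCoeff, tensorForm, coeff_sum, prod_X_eq_monomial_binMon, coeff_C_mul,
    coeff_monomial, (binMon_injective m1).eq_iff, mul_ite, mul_one, mul_zero, bCoeff, sum_filter]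

theorem res_bCoeff_transform {K : Type*} [Field K] {d : ℕ}
    (A At : Fin 2 → (Fin d → Fin 2) → K) (M : Matrix (Fin 2) (Fin 2) K) (hM : M.det ≠ 0)
    (hAt : ∀ i g, At i g = ∑ j, ∑ h : Fin d → Fin 2, (M i j * ∏ k, M (g k) (h k)) * A j h) :
    Res d d (bCoeff At 0) (bCoeff At 1) =
      M.det ^ (d + d * d) * Res d d (bCoeff A 0) (bCoeff A 1) := by
  simp only [Res, ← formCoeff_tensorForm]
  rw [det_sylM_formCoeff (isHomogeneous_tensorForm At),
    det_sylM_formCoeff (isHomogeneous_tensorForm A),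
    funext (tensorForm_transform A At M hAt),
    det_sylvesterMatrix_transform d M M hM (isHomogeneous_tensorForm A), pow_add]

theorem stmt1_general {m : ℕ}
    (A At : Fin 2 → (Fin (m - 1) → Fin 2) → ℂ)
    (C : Matrix (Fin 2) (Fin 2) ℝ) (hC : C * C.transpose = 1)
    (hAt : ∀ i g, At i g = ∑ j : Fin 2, ∑ h : Fin (m - 1) → Fin 2,
        ((C i j : ℂ) * ∏ k, (C (g k) (h k) : ℂ)) * A j h) :
    Res (m - 1) (m - 1) (bCoeff At 0) (bCoeff At 1)
      = Res (m - 1) (m - 1) (bCoeff A 0) (bCoeff A 1) := by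
  have hdet : (C.map Complex.ofReal).det ^ 2 = 1 := by
    have h := congrArg Matrix.det hC
    rw [Matrix.det_mul, Matrix.det_transpose, Matrix.det_one] at h
    have hmap : (C.map Complex.ofReal).det = (C.det : ℂ) := (Complex.ofRealHom.map_det C).symm
    rw [hmap, sq, ← Complex.ofReal_mul, h, Complex.ofReal_one]
  have hne : (C.map Complex.ofReal).det ≠ 0 := fun h => by simp [h] at hdet
  obtain ⟨k, hk⟩ := Nat.even_mul_succ_self (m - 1)
  have hexp : m - 1 + (m - 1) * (m - 1) = 2 * k := by rw [two_mul, ← hk]; ring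
  rw [res_bCoeff_transform A At _ hne hAt, hexp, pow_mul, hdet, one_pow, one_mul]

/-- For `m ≥ 2`, an `m`th order 2-dimensional complex tensor `A`, and a real
orthogonal `2×2` matrix `C`, the resultant of the associated binary forms is invariant under
the orthonormal change of coordinates `ã_{i₁...i_m} = ∑ C_{i₁ j₁} ⋯ C_{i_m j_m} a_{j₁...j_m}`. -/
theorem stmt1 {m : ℕ} (hm : 2 ≤ m)
    (A At : Fin 2 → (Fin (m - 1) → Fin 2) → ℂ)
    (C : Matrix (Fin 2) (Fin 2) ℝ) (hC : C * C.transpose = 1)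
    (hAt : ∀ i g, At i g = ∑ j : Fin 2, ∑ h : Fin (m - 1) → Fin 2,
        ((C i j : ℂ) * ∏ k, (C (g k) (h k) : ℂ)) * A j h) :
    Res (m - 1) (m - 1) (bCoeff At 0) (bCoeff At 1)
      = Res (m - 1) (m - 1) (bCoeff A 0) (bCoeff A 1) :=
  stmt1_general A At C hC hAt
end
end

section
/- Let m = 2k+2 ≥ 4 be even and let A be a regular mth order 2-dimensional complex tensor. Then for every λ ∈ ℂ, ψ_A(λ) = det M_1(λ), where M_1(λ) is the (2m−2)×(2m−2) matrix described in the context. -/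
open Finset

noncomputable section

/-- Coefficient sequence (in the binary-form variable index) of
`G₁ = F₁ - λ (x₁² + x₂²)^{(m-2)/2} x₁`, a binary form of degree `m - 1`. -/
def g1c (m : ℕ) (A : Fin 2 → (Fin (m - 1) → Fin 2) → ℂ) (lam : ℂ) (i : ℕ) : ℂ :=
  bCoeff A 0 i - lam * (if i % 2 = 0 then (((m - 2) / 2).choose (i / 2) : ℂ) else 0)

/-- Coefficient sequence of `G₂ = F₂ - λ (x₁² + x₂²)^{(m-2)/2} x₂`. -/
def g2c (m : ℕ) (A : Fin 2 → (Fin (m - 1) → Fin 2) → ℂ) (lam : ℂ) (i : ℕ) : ℂ :=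
  bCoeff A 1 i - lam * (if i % 2 = 1 then (((m - 2) / 2).choose (i / 2) : ℂ) else 0)

/-- The E-characteristic polynomial `ψ_A(λ) = Res(G₁, G₂)` for even `m`, `n = 2`. -/
def psiEven (m : ℕ) (A : Fin 2 → (Fin (m - 1) → Fin 2) → ℂ) (lam : ℂ) : ℂ :=
  Res (m - 1) (m - 1) (g1c m A lam) (g2c m A lam)

/-- Coefficient sequence of the binary form `H = x₂ F₁ - x₁ F₂` of degree `m`; its
coefficients are `(-c₁, d₁, ..., d_{m-1}, b_m)` where `d_j = b_j - c_{j+1}`, `d_m = b_m`. -/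
def hCoeff (m : ℕ) (A : Fin 2 → (Fin (m - 1) → Fin 2) → ℂ) (r : ℕ) : ℂ :=
  if r = 0 then -bCoeff A 1 0
  else if r ≤ m - 1 then bCoeff A 0 (r - 1) - bCoeff A 1 r
  else if r = m then bCoeff A 0 (m - 1)
  else 0

/-- The `(2m-2) × (2m-2)` matrix `M₁(λ)` of Theorem `simpeven`: rows `1, ..., m-1`
(0-indexed `0, ..., m-2`) carry the shifted coefficients `(β₁, ..., β_m)` of `G₁`,
row `m` (0-indexed `m-1`) carries the coefficients `(γ₁, ..., γ_m)` of `G₂` in columns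
`m-1, ..., 2m-2`, and rows `m+j` for `1 ≤ j ≤ m-2` carry the shifted coefficients
`(-c₁, d₁, ..., d_{m-1}, b_m)` of `x₂F₁ - x₁F₂`. -/
def M1 (m : ℕ) (A : Fin 2 → (Fin (m - 1) → Fin 2) → ℂ) (lam : ℂ) :
    Matrix (Fin (2 * m - 2)) (Fin (2 * m - 2)) ℂ := fun i j =>
  if (i : ℕ) < m - 1 then
    (if (i : ℕ) ≤ (j : ℕ) ∧ (j : ℕ) ≤ (i : ℕ) + (m - 1) then
      g1c m A lam ((j : ℕ) - (i : ℕ)) else 0)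
  else if (i : ℕ) = m - 1 then
    (if m - 2 ≤ (j : ℕ) then g2c m A lam ((j : ℕ) - (m - 2)) else 0)
  else
    (if (i : ℕ) - m ≤ (j : ℕ) ∧ (j : ℕ) ≤ ((i : ℕ) - m) + m then
      hCoeff m A ((j : ℕ) - ((i : ℕ) - m)) else 0)

/-!
Since `x₂ · (x₁² + x₂²)^k x₁ = x₁ · (x₁² + x₂²)^k x₂`, the `λ`-terms cancel in
`x₂ G₁ - x₁ G₂ = x₂ F₁ - x₁ F₂`. So the last `m - 2` rows of `M₁(λ)` are "row `j + 1` of the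
`G₁`-block minus row `j` of the `G₂`-block" of the Sylvester matrix of `G₁, G₂`, and `M₁(λ)` with
its `G₂`-row cycled to the bottom is `E · Syl(G₁, G₂)` for a lower-triangular `E` with `m - 2`
diagonal entries `-1`. The sign `(-1)^(m-2)` of the cycle cancels `det E`.
-/

theorem Fin.val_cycleIcc {n : ℕ} (i j k : Fin n) :
    (Fin.cycleIcc i j k : ℕ) =
      if (k : ℕ) < i ∨ (j : ℕ) < k then (k : ℕ) else if (k : ℕ) = j then (i : ℕ) else k + 1 := by
  have : NeZero n := ⟨by have := k.isLt; omega⟩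
  split_ifs with hout hlast
  · rcases hout with hki | hjk
    · rw [Fin.cycleIcc_of_lt hki]
    · rw [Fin.cycleIcc_of_gt hjk]
  · rw [Fin.ext hlast, Fin.cycleIcc_of_last (by omega)]
  · rw [Fin.cycleIcc_of_ge_of_lt (by omega) (by omega), Fin.val_add_one_of_lt' (by omega)]

theorem Fin.sum_ite_val_eq_mul {R : Type*} [CommRing R] {n a : ℕ} (ha : a < n) (v : Fin n → R) :
    ∑ t : Fin n, (if (t : ℕ) = a then (1 : R) else 0) * v t = v ⟨a, ha⟩ := by
  rw [Finset.sum_eq_single ⟨a, ha⟩ (fun t _ ht => by rw [if_neg (fun h => ht (Fin.ext h)), zero_mul])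
    (by simp), if_pos rfl, one_mul]

/-- Coefficient `r` (of `x₁^(d+1-r) x₂^r`) of `x₂ f - x₁ g` for binary forms `f`, `g` of degree `d`. -/
def crossCoeff {R : Type*} [CommRing R] (d : ℕ) (f g : ℕ → R) (r : ℕ) : R :=
  (if r = 0 then 0 else f (r - 1)) - (if r ≤ d then g r else 0)

namespace Matrix

variable {R : Type*} [CommRing R]

/-- The Sylvester matrix `sylM d d f g` with its last `g`-row moved up to position `d` and its
other `g`-rows replaced by the rows of `x₂ f - x₁ g` at the same offsets. -/
def sylvesterCross (d : ℕ) (f g : ℕ → R) : Matrix (Fin (d + d)) (Fin (d + d)) R := fun i j =>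
  if (i : ℕ) < d then
    (if (i : ℕ) ≤ (j : ℕ) ∧ (j : ℕ) ≤ (i : ℕ) + d then f ((j : ℕ) - (i : ℕ)) else 0)
  else if (i : ℕ) = d then
    (if d - 1 ≤ (j : ℕ) then g ((j : ℕ) - (d - 1)) else 0)
  else
    (if (i : ℕ) - (d + 1) ≤ (j : ℕ) ∧ (j : ℕ) ≤ ((i : ℕ) - (d + 1)) + (d + 1) then
      crossCoeff d f g ((j : ℕ) - ((i : ℕ) - (d + 1))) else 0)

def sylvesterCrossRowOp (d : ℕ) : Matrix (Fin (d + d)) (Fin (d + d)) R := fun i j =>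
  if (i : ℕ) < d ∨ (i : ℕ) = d + d - 1 then (if (j : ℕ) = i then 1 else 0)
  else (if (j : ℕ) = (i : ℕ) + 1 - d then 1 else 0) - (if (j : ℕ) = i then 1 else 0)

theorem sylvesterCrossRowOp_isLowerTriangular (d : ℕ) :
    (sylvesterCrossRowOp d : Matrix (Fin (d + d)) (Fin (d + d)) R).IsLowerTriangular := by
  intro i j hij
  have hij : (i : ℕ) < j := hij
  have hji : (j : ℕ) ≠ i := by omega
  have hshift : (j : ℕ) ≠ i + 1 - d := by omega
  simp [sylvesterCrossRowOp, hji, hshift]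

theorem det_sylvesterCrossRowOp (d : ℕ) :
    (sylvesterCrossRowOp d : Matrix (Fin (d + d)) (Fin (d + d)) R).det = (-1) ^ (d - 1) := by
  rw [det_of_isLowerTriangular _ (sylvesterCrossRowOp_isLowerTriangular d)]
  have hdiag : ∀ i : Fin (d + d), (sylvesterCrossRowOp d : Matrix _ _ R) i i =
      if (i : ℕ) < d ∨ (i : ℕ) = d + d - 1 then 1 else -1 := by
    intro i
    simp only [sylvesterCrossRowOp]
    split_ifs <;> first | rfl | omega | ring
  simp only [hdiag]
  rw [Fin.prod_univ_eq_prod_range (fun t => if t < d ∨ t = d + d - 1 then (1 : R) else -1),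
    prod_ite, prod_const_one, one_mul, prod_const]
  have hfilter : (range (d + d)).filter (fun t => ¬(t < d ∨ t = d + d - 1)) = Ico d (d + d - 1) := by
    ext t
    simp only [mem_filter, mem_range, mem_Ico]
    omega
  rw [hfilter, Nat.card_Ico]
  congr 1
  omega

theorem sylvesterCross_submatrix_cycleIcc {d : ℕ} (hd : 0 < d) (f g : ℕ → R) :
    (sylvesterCross d f g).submatrix (Fin.cycleIcc ⟨d, by omega⟩ ⟨d + d - 1, by omega⟩) id =
      sylvesterCrossRowOp d * sylM d d f g := by
  ext i j
  have hcycle := Fin.val_cycleIcc (⟨d, by omega⟩ : Fin (d + d)) ⟨d + d - 1, by omega⟩ i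
  dsimp only at hcycle
  have hj := j.isLt
  rw [mul_apply, submatrix_apply, id]
  by_cases hkeep : (i : ℕ) < d ∨ (i : ℕ) = d + d - 1
  · simp only [sylvesterCrossRowOp, if_pos hkeep, Fin.sum_ite_val_eq_mul i.isLt]
    rcases hkeep with hlt | hlast
    · rw [if_pos (Or.inl hlt)] at hcycle
      simp [sylvesterCross, sylM, hcycle, hlt]
    · rw [if_neg (by omega), if_pos hlast] at hcycle
      simp only [sylvesterCross, sylM, hcycle]
      split_ifs <;> first | rfl | omega | (congr 1; omega)
  · rw [if_neg (by omega), if_neg (by omega)] at hcycle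
    simp only [sylvesterCrossRowOp, if_neg hkeep, sub_mul, Finset.sum_sub_distrib,
      Fin.sum_ite_val_eq_mul i.isLt, Fin.sum_ite_val_eq_mul (show (i : ℕ) + 1 - d < d + d by omega)]
    have hoff : (i : ℕ) + 1 - (d + 1) = i - d := by omega
    simp only [sylvesterCross, sylM, crossCoeff, hcycle, hoff, if_neg (show ¬(i : ℕ) + 1 < d by omega),
      if_neg (show (i : ℕ) + 1 ≠ d by omega), if_pos (show (i : ℕ) + 1 - d < d by omega),
      if_neg (show ¬(i : ℕ) < d by omega)]
    split_ifs <;> first | (exfalso; omega) | (congr 2 <;> omega) | simp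

theorem det_sylvesterCross (d : ℕ) (f g : ℕ → R) :
    (sylvesterCross d f g).det = (sylM d d f g).det := by
  rcases Nat.eq_zero_or_pos d with rfl | hd
  · simp
  have hdet := congrArg det (sylvesterCross_submatrix_cycleIcc hd f g)
  rw [det_permute, det_mul, det_sylvesterCrossRowOp,
    Fin.sign_cycleIcc_of_le (by simp [Fin.le_def]; omega)] at hdet
  push_cast at hdet
  rw [show d + d - 1 - d = d - 1 by omega] at hdet
  exact ((isUnit_neg_one (α := R)).pow _).mul_left_cancel hdet

end Matrix

theorem hCoeff_eq_crossCoeff {m : ℕ} (hme : Even m) (A : Fin 2 → (Fin (m - 1) → Fin 2) → ℂ)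
    (lam : ℂ) {r : ℕ} (hr : r ≤ m) :
    hCoeff m A r = crossCoeff (m - 1) (g1c m A lam) (g2c m A lam) r := by
  have hm2 : m % 2 = 0 := Nat.even_iff.mp hme
  -- at `r = m` the `λ`-term of `g1c` vanishes since `m - 1` is odd
  unfold hCoeff crossCoeff g1c g2c
  split_ifs <;> (try subst_vars) <;>
    first | (exfalso; omega) | ring1 | (rw [show (r - 1) / 2 = r / 2 by omega]; ring)

theorem M1_eq_submatrix_sylvesterCross {m : ℕ} (hm : 1 ≤ m) (hme : Even m)
    (A : Fin 2 → (Fin (m - 1) → Fin 2) → ℂ) (lam : ℂ) :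
    M1 m A lam = (Matrix.sylvesterCross (m - 1) (g1c m A lam) (g2c m A lam)).submatrix
      (finCongr (by omega)) (finCongr (by omega)) := by
  ext i j
  have h1 : m - 1 + 1 = m := by omega
  have h2 : m - 1 - 1 = m - 2 := by omega
  simp only [M1, Matrix.sylvesterCross, Matrix.submatrix_apply, finCongr_apply, Fin.val_cast, h1, h2]
  split_ifs <;> first | rfl | exact hCoeff_eq_crossCoeff hme A lam (by omega)

theorem stmt6_general {m : ℕ} (hm : 4 ≤ m) (hme : Even m)
    (A : Fin 2 → (Fin (m - 1) → Fin 2) → ℂ) (lam : ℂ) :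
    psiEven m A lam = (M1 m A lam).det := by
  rw [M1_eq_submatrix_sylvesterCross (by omega) hme, Matrix.det_submatrix_equiv_self,
    Matrix.det_sylvesterCross]
  rfl

/-- For even `m = 2k+2 ≥ 4` and a regular `m`th order 2-dimensional
complex tensor `A`, `ψ_A(λ) = det M₁(λ)` for every `λ ∈ ℂ`. -/
theorem stmt6 {m : ℕ} (hm : 4 ≤ m) (hme : Even m)
    (A : Fin 2 → (Fin (m - 1) → Fin 2) → ℂ) (hA : Regular A) (lam : ℂ) :
    psiEven m A lam = (M1 m A lam).det :=
  stmt6_general hm hme A lam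
end
end

section
/- Let m ≥ 4 be even and let A be a regular mth order 2-dimensional complex tensor. Let G_1 = F_1 − λ(x_1²+x_2²)^{(m−2)/2} x_1 (a binary form of degree m−1) and let H = x_2 F_1 − x_1 F_2 (a binary form of degree m). Then for every λ ∈ ℂ, Res(G_1, H) = b_m · ψ_A(λ), where b_m = a_{12...2}. -/
open Finset

noncomputable section

/-!
The λ-terms of `G₁` and `G₂` cancel in `x₂ G₁ - x₁ G₂`, so `H = x₂ G₁ - x₁ G₂`; on coefficient
sequences (indexed by the power of `x₂`) this reads `mulX₂ G₁ - G₂`, as `x₁ G₂` has the same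
sequence as `G₂`. In the Sylvester matrix of `(G₁, H)`, subtracting from every `H`-row the
`G₁`-row shifted one step further leaves the rows of `-x₁ G₂`, so
`Res(G₁, H) = (-1)^(m-1) Res(G₁, x₁ G₂)`. The last column of the Sylvester matrix of
`(G₁, x₁ G₂)` has the single entry `b_m`, the `x₂^(m-1)`-coefficient of `G₁`; expanding along
it gives `(-1)^(m-1) b_m Res(G₁, G₂)`, and the two signs cancel.
-/

section Sylvester

variable {R : Type*} [CommRing R] {n : ℕ}

theorem Matrix.det_smul_row_add_earlier_row (M : Matrix (Fin n) (Fin n) R) (a c : Fin n → R)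
    (σ : Fin n → Fin n) (hσ : ∀ i, c i ≠ 0 → σ i < i) :
    (Matrix.of fun i j => a i * M i j + c i * M (σ i) j).det = (∏ i, a i) * M.det := by
  set L : Matrix (Fin n) (Fin n) R :=
    Matrix.of fun i k => (if k = i then a i else 0) + (if k = σ i then c i else 0)
  have hL : (Matrix.of fun i j => a i * M i j + c i * M (σ i) j) = L * M := by
    ext i j
    simp [L, Matrix.mul_apply, add_mul, Finset.sum_add_distrib]
  have hLower : L.IsLowerTriangular := by
    intro i k hik
    have hik : i < k := hik
    rcases eq_or_ne (c i) 0 with hc | hc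
    · simp [L, hc, hik.ne']
    · simp [L, hik.ne', ((hσ i hc).trans hik).ne']
  have hDiag : ∀ i, L i i = a i := by
    intro i
    rcases eq_or_ne (c i) 0 with hc | hc
    · simp [L, hc]
    · simp [L, (hσ i hc).ne']
  rw [hL, Matrix.det_mul, Matrix.det_of_isLowerTriangular L hLower, Finset.prod_congr rfl
    fun i _ => hDiag i]

def mulX₂ (f : ℕ → R) (r : ℕ) : R := if r = 0 then 0 else f (r - 1)

theorem Res_mulX₂_sub (d : ℕ) (f g : ℕ → R) :
    Res d (d + 1) f (mulX₂ f - g) = (-1) ^ d * Res d (d + 1) f g := by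
  set a : Fin (d + (d + 1)) → R := fun i => if d + 1 ≤ (i : ℕ) then -1 else 1
  set c : Fin (d + (d + 1)) → R := fun i => if d + 1 ≤ (i : ℕ) then 1 else 0
  set σ : Fin (d + (d + 1)) → Fin (d + (d + 1)) := fun i => ⟨i - d, by omega⟩
  have hσ : ∀ i, c i ≠ 0 → σ i < i := by
    intro i hi
    simp only [c, ne_eq, ite_eq_right_iff, Classical.not_imp] at hi
    rw [Fin.lt_def]
    show (i : ℕ) - d < i
    omega
  have hRows : (Matrix.of fun i j => a i * sylM d (d + 1) f (mulX₂ f - g) i j +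
      c i * sylM d (d + 1) f (mulX₂ f - g) (σ i) j) = sylM d (d + 1) f g := by
    ext i j
    simp only [a, c, σ, sylM, mulX₂, Matrix.of_apply, Pi.sub_apply]
    split_ifs <;> first | omega | ring1 |
      (rw [show (j : ℕ) - (i - (d + 1)) - 1 = j - (i - d) by omega]; ring)
  have hSign : ∏ i, a i = (-1) ^ d := by
    rw [Fin.prod_univ_eq_prod_range (fun k => if d + 1 ≤ k then (-1 : R) else 1),
      add_comm d, Finset.prod_range_add]
    simp +contextual [Finset.prod_ite_of_false]
  have hDet := Matrix.det_smul_row_add_earlier_row (sylM d (d + 1) f (mulX₂ f - g)) a c σ hσ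
  rw [hRows, hSign] at hDet
  rw [Res, Res, hDet, ← mul_assoc, ← mul_pow, neg_one_mul, neg_neg, one_pow, one_mul]

theorem Res_succ_of_eq_zero (d : ℕ) (f g : ℕ → R) (hg : g (d + 1) = 0) :
    Res d (d + 1) f g = (-1) ^ d * f d * Res d d f g := by
  set M : Matrix (Fin (d + d + 1)) (Fin (d + d + 1)) R := sylM d (d + 1) f g
  set k : Fin (d + d + 1) := ⟨d, by omega⟩
  have hLastCol : ∀ i, i ≠ k → M i (Fin.last (d + d)) = 0 := by
    intro i hi
    have hi : (i : ℕ) ≠ d := fun h => hi (Fin.ext h)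
    simp only [M, sylM, Fin.val_last]
    split_ifs <;> first | omega | rfl | rw [show d + d - (i - (d + 1)) = d + 1 by omega, hg]
  have hPivot : M k (Fin.last (d + d)) = f d := by
    simp [M, k, sylM]
  have hMinor : M.submatrix k.succAbove (Fin.last (d + d)).succAbove = sylM d d f g := by
    ext i j
    have hRow : (k.succAbove i : ℕ) = if (i : ℕ) < d then (i : ℕ) else (i : ℕ) + 1 := by
      unfold Fin.succAbove
      split_ifs <;> simp_all [k, Fin.lt_def]
    simp only [M, sylM, Matrix.submatrix_apply, Fin.succAbove_last_apply, Fin.val_castSucc, hRow]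
    split_ifs <;> (try rw [Nat.add_sub_add_right]) <;>
      first | omega | rfl | rw [show (j : ℕ) - (i - d) = d + 1 by omega, hg]
  rw [Res, Matrix.det_succ_column M (Fin.last (d + d)), Finset.sum_eq_single k
    (fun i _ hi => by rw [hLastCol i hi, mul_zero, zero_mul]) (by simp), hPivot, hMinor]
  have hSign : (-1 : R) ^ (d + (d + d)) = (-1) ^ d := by
    rw [pow_add, ← two_mul, pow_mul, neg_one_sq, one_pow, mul_one]
  simp only [k, Fin.val_last, hSign]
  rfl

theorem Res_mulX₂_sub_of_eq_zero (d : ℕ) (f g : ℕ → R) (hg : g (d + 1) = 0) :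
    Res d (d + 1) f (mulX₂ f - g) = f d * Res d d f g := by
  rw [Res_mulX₂_sub, Res_succ_of_eq_zero d f g hg, ← mul_assoc, ← mul_assoc, ← mul_pow,
    neg_one_mul, neg_neg, one_pow, one_mul]

theorem bCoeff_eq_zero_of_lt {m1 : ℕ} (A : Fin 2 → (Fin m1 → Fin 2) → R) (i0 : Fin 2) {i : ℕ}
    (hi : m1 < i) : bCoeff A i0 i = 0 := by
  refine Finset.sum_eq_zero fun g hg => absurd (Finset.mem_filter.mp hg).2 ?_
  have := (Finset.card_filter_le univ fun k => g k = 1).trans_eq (Finset.card_fin m1)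
  omega

end Sylvester

section TensorCoefficients

variable {m : ℕ} (A : Fin 2 → (Fin (m - 1) → Fin 2) → ℂ) (lam : ℂ)

theorem g1c_eq_bCoeff_of_le (hm : 2 ≤ m) {i : ℕ} (hi : m - 1 ≤ i) :
    g1c m A lam i = bCoeff A 0 i := by
  rw [g1c, sub_eq_self]
  split_ifs
  · rw [Nat.choose_eq_zero_of_lt (by omega), Nat.cast_zero, mul_zero]
  · rw [mul_zero]

theorem g2c_eq_bCoeff_of_le (hm : 2 ≤ m) {i : ℕ} (hi : m ≤ i) :
    g2c m A lam i = bCoeff A 1 i := by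
  rw [g2c, sub_eq_self]
  split_ifs
  · rw [Nat.choose_eq_zero_of_lt (by omega), Nat.cast_zero, mul_zero]
  · rw [mul_zero]

theorem hCoeff_eq_mulX₂_g1c_sub_g2c (hm : 2 ≤ m) :
    hCoeff m A = mulX₂ (g1c m A lam) - g2c m A lam := by
  funext r
  rw [Pi.sub_apply, mulX₂, hCoeff]
  rcases Nat.lt_or_ge r m with hr | hr
  · rcases r with _ | s
    · simp [g2c]
    · simp only [Nat.add_one_ne_zero, if_false, Nat.add_sub_cancel, g1c, g2c]
      rw [if_pos (show s + 1 ≤ m - 1 by omega)]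
      by_cases hs : s % 2 = 0
      · rw [if_pos hs, if_pos (show (s + 1) % 2 = 1 by omega),
          show (s + 1) / 2 = s / 2 by omega]
        ring
      · rw [if_neg hs, if_neg (show ¬(s + 1) % 2 = 1 by omega)]
        ring
  · rw [g1c_eq_bCoeff_of_le A lam hm (by omega), g2c_eq_bCoeff_of_le A lam hm hr,
      bCoeff_eq_zero_of_lt A 1 (by omega : m - 1 < r), if_neg (by omega), if_neg (by omega)]
    rcases hr.eq_or_lt with rfl | hr
    · simp [show m ≠ 0 by omega]
    · simp [bCoeff_eq_zero_of_lt A 0 (by omega : m - 1 < r - 1), hr.ne']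

end TensorCoefficients

theorem stmt7_general {m : ℕ} (hm : 4 ≤ m)
    (A : Fin 2 → (Fin (m - 1) → Fin 2) → ℂ) (lam : ℂ) :
    Res (m - 1) m (g1c m A lam) (hCoeff m A) = bCoeff A 0 (m - 1) * psiEven m A lam := by
  have hm' : m - 1 + 1 = m := by omega
  have hTop : g2c m A lam (m - 1 + 1) = 0 := by
    rw [hm', g2c_eq_bCoeff_of_le A lam (by omega) le_rfl, bCoeff_eq_zero_of_lt A 1 (by omega)]
  have hRes := Res_mulX₂_sub_of_eq_zero (m - 1) (g1c m A lam) (g2c m A lam) hTop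
  rw [hm', g1c_eq_bCoeff_of_le A lam (by omega) le_rfl,
    ← hCoeff_eq_mulX₂_g1c_sub_g2c A lam (by omega)] at hRes
  exact hRes

/-- For even `m ≥ 4` and a regular `m`th order 2-dimensional complex
tensor `A`: with `G₁ = F₁ - λ(x₁²+x₂²)^{(m-2)/2}x₁` (degree `m-1`) and
`H = x₂F₁ - x₁F₂` (degree `m`), one has `Res(G₁, H) = b_m · ψ_A(λ)` for every `λ`,
where `b_m = a_{12...2}`. -/
theorem stmt7 {m : ℕ} (hm : 4 ≤ m) (hme : Even m)
    (A : Fin 2 → (Fin (m - 1) → Fin 2) → ℂ) (hA : Regular A) (lam : ℂ) :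
    Res (m - 1) m (g1c m A lam) (hCoeff m A) = bCoeff A 0 (m - 1) * psiEven m A lam :=
  stmt7_general hm A lam
end
end

section
/- Let F_1, F_2 ∈ ℂ[x_0, x_1, x_2] be homogeneous of degrees d_1 ≥ 1 and d_2 ≥ 1. If the set of common zeros of F_1 and F_2 in the complex projective plane ℂℙ² is infinite, then there exist indices s ≠ t in {0,1,2} such that Res^{s,t}(z) = 0 for all z ∈ ℂ, i.e. Res^{s,t} vanishes identically as a polynomial in z. -/
/-!
If `p` is a common zero with `p t ≠ 0` and `z = p s / p t`, then after the substitution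
`x_s ↦ z x_t` both forms vanish at the nonzero point `(p u, p v)`, `{u, v} = {0, 1, 2} \ {s}`,
so the vector of monomials `(p u ^ (N - 1 - j) * p v ^ j)ⱼ` lies in the kernel of the
Sylvester matrix and `Res^{s,t}(z) = 0`. A point with `p t ≠ 0` is determined by its ratios
`p j / p t`, so infinitely many common zeros give infinitely many such `z` for some `s ≠ t`;
as `Res^{s,t}` is a polynomial in `z`, it vanishes identically.
-/

open Finset

noncomputable section

/-- `Res^{s,t}(z)`: substitute `y_j` for `x_j` (`j ≠ s`) and `z·y_t` for `x_s` in the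
homogeneous ternary forms `F₁, F₂` of degrees `d₁, d₂`; the results are binary forms in
the two variables `y_u, y_v` (`{u, v} = {0,1,2} \ {s}`, `u < v`), and `Res^{s,t}(z)` is
their resultant. -/
def resST (d1 d2 : ℕ) (F1 F2 : MvPolynomial (Fin 3) ℂ) (s t : Fin 3) (z : ℂ) : ℂ :=
  let u : Fin 3 := if s = 0 then 1 else 0
  let v : Fin 3 := if s = 2 then 1 else 2
  let sub : MvPolynomial (Fin 3) ℂ → MvPolynomial (Fin 3) ℂ := fun F =>
    MvPolynomial.aeval
      (fun j : Fin 3 => if j = s then MvPolynomial.C z * MvPolynomial.X t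
        else MvPolynomial.X j) F
  Res d1 d2
    (fun i => MvPolynomial.coeff (Finsupp.single u (d1 - i) + Finsupp.single v i) (sub F1))
    (fun i => MvPolynomial.coeff (Finsupp.single u (d2 - i) + Finsupp.single v i) (sub F2))

open Matrix

def binaryFormEval {R : Type*} [CommSemiring R] (d : ℕ) (f : ℕ → R) (a b : R) : R :=
  ∑ k ∈ range (d + 1), f k * a ^ (d - k) * b ^ k

section Resultant

variable {R : Type*} [CommRing R]

lemma sum_shiftedRow_mul_powers (f : ℕ → R) (d N i : ℕ) (h : i + d < N) (a b : R) :
    ∑ j : Fin N,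
        (if i ≤ j ∧ (j : ℕ) ≤ i + d then f (j - i) else 0) * (a ^ (N - 1 - j) * b ^ (j : ℕ))
      = binaryFormEval d f a b * (a ^ (N - 1 - (i + d)) * b ^ i) := by
  rw [Fin.sum_univ_eq_sum_range (fun j =>
    (if i ≤ j ∧ j ≤ i + d then f (j - i) else 0) * (a ^ (N - 1 - j) * b ^ j))]
  simp only [ite_mul, zero_mul]
  rw [← sum_filter]
  have hwindow : (range N).filter (fun j => i ≤ j ∧ j ≤ i + d) = Ico i (i + (d + 1)) := by
    ext j; simp only [mem_filter, mem_range, mem_Ico]; omega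
  rw [hwindow, sum_Ico_eq_sum_range, add_tsub_cancel_left, binaryFormEval, sum_mul]
  refine sum_congr rfl fun k hk => ?_
  have hk : k ≤ d := Nat.lt_succ_iff.mp (mem_range.mp hk)
  rw [add_tsub_cancel_left, show N - 1 - (i + k) = (d - k) + (N - 1 - (i + d)) by omega,
    pow_add, pow_add]
  ring

lemma sylM_mulVec_powers_eq_zero {d e : ℕ} {f g : ℕ → R} {a b : R}
    (hf : binaryFormEval d f a b = 0) (hg : binaryFormEval e g a b = 0) :
    sylM d e f g *ᵥ (fun j : Fin (d + e) => a ^ (d + e - 1 - j) * b ^ (j : ℕ)) = 0 := by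
  funext i
  by_cases hi : (i : ℕ) < e
  · simp only [mulVec, dotProduct, sylM, hi, if_true]
    rw [sum_shiftedRow_mul_powers f d _ _ (by omega), hf, zero_mul, Pi.zero_apply]
  · simp only [mulVec, dotProduct, sylM, hi, if_false]
    rw [sum_shiftedRow_mul_powers g e _ _ (by omega), hg, zero_mul, Pi.zero_apply]

lemma powers_ne_zero [NoZeroDivisors R] {N : ℕ} (hN : 0 < N) {a b : R}
    (hab : a ≠ 0 ∨ b ≠ 0) :
    (fun j : Fin N => a ^ (N - 1 - j) * b ^ (j : ℕ)) ≠ 0 := by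
  intro h
  rcases hab with ha | hb
  · have := congr_fun h ⟨0, hN⟩
    simp only [Nat.sub_zero, pow_zero, mul_one, Pi.zero_apply] at this
    exact pow_ne_zero _ ha this
  · have := congr_fun h ⟨N - 1, by omega⟩
    simp only [Nat.sub_self, pow_zero, one_mul, Pi.zero_apply] at this
    exact pow_ne_zero _ hb this

theorem res_eq_zero_of_common_zero [IsDomain R] {d e : ℕ} (hde : 0 < d + e) {f g : ℕ → R}
    {a b : R} (hab : a ≠ 0 ∨ b ≠ 0)
    (hf : binaryFormEval d f a b = 0) (hg : binaryFormEval e g a b = 0) :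
    Res d e f g = 0 :=
  Matrix.exists_mulVec_eq_zero_iff.mp
    ⟨_, powers_ne_zero hde hab, sylM_mulVec_powers_eq_zero hf hg⟩

theorem map_res {S : Type*} [CommRing S] (φ : R →+* S) (d e : ℕ) (f g : ℕ → R) :
    φ (Res d e f g) = Res d e (φ ∘ f) (φ ∘ g) := by
  rw [Res, Res, RingHom.map_det, RingHom.mapMatrix_apply]
  congr 1
  ext i j
  simp only [Matrix.map_apply, sylM]
  split_ifs <;> simp

end Resultant

lemma Finsupp.prod_single_add_single_pow {σ M : Type*} [CommMonoid M] (u v : σ) (a b : ℕ)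
    (y : σ → M) :
    (Finsupp.single u a + Finsupp.single v b).prod (fun i e => y i ^ e) = y u ^ a * y v ^ b := by
  rw [Finsupp.prod_add_index' (fun _ => pow_zero _) (fun _ _ _ => pow_add _ _ _),
    Finsupp.prod_single_index (h := fun i e => y i ^ e) (pow_zero _),
    Finsupp.prod_single_index (h := fun i e => y i ^ e) (pow_zero _)]

namespace MvPolynomial

section BinaryForm

variable {σ R : Type*} [CommSemiring R] {u v : σ}

def binaryCoeffs (u v : σ) (d : ℕ) (G : MvPolynomial σ R) : ℕ → R :=
  fun k => coeff (Finsupp.single u (d - k) + Finsupp.single v k) G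

variable [DecidableEq σ] {G : MvPolynomial σ R} {d : ℕ}

lemma IsHomogeneous.eq_single_add_single (hG : G.IsHomogeneous d) (huv : u ≠ v)
    (hvars : ∀ i ∈ G.vars, i = u ∨ i = v) {m : σ →₀ ℕ} (hm : m ∈ G.support) :
    m v ≤ d ∧ m = Finsupp.single u (d - m v) + Finsupp.single v (m v) := by
  have hsplit : m = Finsupp.single u (m u) + Finsupp.single v (m v) := by
    ext j
    by_cases hju : j = u
    · subst hju; simp [huv.symm]
    by_cases hjv : j = v
    · subst hjv; simp [huv]
    have hj : j ∉ m.support := fun hj =>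
      (hvars j ((mem_vars_iff_mem_support j).mpr ⟨m, hm, hj⟩)).elim hju hjv
    simp [Ne.symm hju, Ne.symm hjv, Finsupp.notMem_support_iff.mp hj]
  have hdeg : m u + m v = d := by
    have := hG (mem_support_iff.mp hm)
    rw [hsplit] at this
    simpa [Finsupp.weight_single] using this
  refine ⟨by omega, ?_⟩
  rwa [show d - m v = m u by omega]

theorem IsHomogeneous.eval_eq_binaryFormEval (hG : G.IsHomogeneous d) (huv : u ≠ v)
    (hvars : ∀ i ∈ G.vars, i = u ∨ i = v) (y : σ → R) :
    eval y G = binaryFormEval d (binaryCoeffs u v d G) (y u) (y v) := by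
  set mon : ℕ → σ →₀ ℕ := fun k => Finsupp.single u (d - k) + Finsupp.single v k
  have hmon_v (k : ℕ) : mon k v = k := by simp [mon, huv]
  have hsupport : G.support ⊆ (range (d + 1)).image mon := fun m hm => by
    obtain ⟨hle, heq⟩ := hG.eq_single_add_single huv hvars hm
    exact mem_image.mpr ⟨m v, mem_range.mpr (by omega), heq.symm⟩
  calc eval y G = ∑ m ∈ G.support, coeff m G * m.prod (fun i e => y i ^ e) := eval_eq _ _
    _ = ∑ m ∈ (range (d + 1)).image mon, coeff m G * m.prod (fun i e => y i ^ e) :=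
      sum_subset hsupport fun m _ hm => by rw [notMem_support_iff.mp hm, zero_mul]
    _ = ∑ k ∈ range (d + 1), coeff (mon k) G * (mon k).prod (fun i e => y i ^ e) :=
      sum_image fun k _ l _ h => by rw [← hmon_v k, ← hmon_v l, h]
    _ = _ := sum_congr rfl fun k _ => by
      rw [Finsupp.prod_single_add_single_pow, binaryCoeffs, mul_assoc]

end BinaryForm

section ScaleSubst

variable {σ R : Type*} [CommRing R] [DecidableEq σ] {s t : σ}

def scaleSubst (s t : σ) (c : R) : σ → MvPolynomial σ R :=
  fun j => if j = s then C c * X t else X j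

lemma IsHomogeneous.aeval_scaleSubst {F : MvPolynomial σ R} {d : ℕ} (hF : F.IsHomogeneous d)
    (c : R) : (MvPolynomial.aeval (scaleSubst s t c) F).IsHomogeneous d := by
  simpa using hF.aeval (scaleSubst s t c) (n := 1) fun j => by
    unfold scaleSubst
    split_ifs
    · exact (isHomogeneous_X R t).C_mul c
    · exact isHomogeneous_X R j

lemma ne_of_mem_vars_aeval_scaleSubst (hts : t ≠ s) (c : R) {F : MvPolynomial σ R} {i : σ}
    (hi : i ∈ (aeval (scaleSubst s t c) F).vars) : i ≠ s := by
  rcases subsingleton_or_nontrivial R with _ | _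
  · rw [Subsingleton.elim (aeval (scaleSubst s t c) F) 0, vars_0] at hi
    exact absurd hi (notMem_empty i)
  rintro rfl
  rw [aeval_eq_bind₁] at hi
  obtain ⟨j, -, hj⟩ := mem_vars_bind₁ _ F hi
  unfold scaleSubst at hj
  split_ifs at hj with hjs
  · have := vars_mul _ _ hj
    rw [vars_C, vars_X, empty_union, mem_singleton] at this
    exact hts this.symm
  · rw [vars_X, mem_singleton] at hj
    exact hjs hj.symm

lemma eval_aeval_scaleSubst {c : R} {y : σ → R} (hy : y s = c * y t) (F : MvPolynomial σ R) :
    eval y (aeval (scaleSubst s t c) F) = eval y F := by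
  have hsubst : (fun j => eval y (scaleSubst s t c j)) = y := by
    funext j
    unfold scaleSubst
    split_ifs with hj <;> simp [hj, hy]
  rw [aeval_eq_bind₁]
  exact (eval₂Hom_bind₁ (RingHom.id R) y _ F).trans (congrArg (fun g => eval g F) hsubst)

lemma map_evalRingHom_aeval_scaleSubst (z : R) (F : MvPolynomial σ R) :
    map (Polynomial.evalRingHom z) (aeval (scaleSubst s t Polynomial.X) (map Polynomial.C F))
      = aeval (scaleSubst s t z) F := by
  induction F using MvPolynomial.induction_on with
  | C a => simp [algebraMap_eq]
  | add p q hp hq => simp only [map_add, hp, hq]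
  | mul_X p j hp =>
    simp only [map_mul, map_X, aeval_X, hp]
    unfold scaleSubst
    split_ifs <;> simp

end ScaleSubst

end MvPolynomial

namespace Projectivization

open scoped LinearAlgebra.Projectivization

variable {K ι : Type*} [Field K]

lemma exists_infinite_rep_ne_zero [Finite ι] {S : Set (ℙ K (ι → K))} (hS : S.Infinite) :
    ∃ t, {p ∈ S | p.rep t ≠ 0}.Infinite := by
  by_contra! hfin
  refine hS ((Set.finite_iUnion hfin).subset fun p hp => ?_)
  obtain ⟨t, ht⟩ := Function.ne_iff.mp p.rep_nonzero
  exact Set.mem_iUnion.mpr ⟨t, hp, ht⟩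

lemma injOn_inv_smul_rep (t : ι) :
    Set.InjOn (fun p : ℙ K (ι → K) => (p.rep t)⁻¹ • p.rep) {p | p.rep t ≠ 0} := by
  intro p hp q _ (hpq : (p.rep t)⁻¹ • p.rep = (q.rep t)⁻¹ • q.rep)
  rw [← p.mk_rep, ← q.mk_rep, mk_eq_mk_iff']
  refine ⟨p.rep t / q.rep t, ?_⟩
  calc (p.rep t / q.rep t) • q.rep = p.rep t • (q.rep t)⁻¹ • q.rep := by
        rw [div_eq_mul_inv, mul_smul]
    _ = p.rep t • (p.rep t)⁻¹ • p.rep := by rw [← hpq]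
    _ = p.rep := smul_inv_smul₀ hp _

theorem exists_infinite_coordinate_ratios [Finite ι] {S : Set (ℙ K (ι → K))}
    (hS : S.Infinite) :
    ∃ s t : ι, s ≠ t ∧
      {z : K | ∃ p ∈ S, p.rep t ≠ 0 ∧ p.rep s = z * p.rep t}.Infinite := by
  obtain ⟨t, ht⟩ := exists_infinite_rep_ne_zero hS
  obtain ⟨s, hs⟩ :
      ∃ s, {z : K | ∃ p ∈ S, p.rep t ≠ 0 ∧ p.rep s = z * p.rep t}.Infinite := by
    by_contra! hfin
    refine ht (Set.Finite.of_finite_image ((Set.Finite.pi hfin).subset ?_)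
      ((injOn_inv_smul_rep t).mono fun p hp => hp.2))
    rintro _ ⟨p, ⟨hpS, hpt⟩, rfl⟩
    exact Set.mem_univ_pi.mpr fun s =>
      ⟨p, hpS, hpt, by simp only [Pi.smul_apply, smul_eq_mul]; field_simp⟩
  refine ⟨s, t, ?_, hs⟩
  rintro rfl
  refine hs ((Set.finite_singleton 1).subset ?_)
  rintro z ⟨p, -, hpt, hz⟩
  exact (mul_eq_right₀ hpt).mp hz.symm

end Projectivization

section ResST

open MvPolynomial

-- `complFst s < complSnd s` enumerate `{0, 1, 2} \ {s}`, as `u`, `v` do in `resST`.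
def Fin3.complFst (s : Fin 3) : Fin 3 := if s = 0 then 1 else 0

def Fin3.complSnd (s : Fin 3) : Fin 3 := if s = 2 then 1 else 2

lemma Fin3.complFst_ne_complSnd (s : Fin 3) : Fin3.complFst s ≠ Fin3.complSnd s := by
  revert s; decide

lemma Fin3.eq_complFst_or_eq_complSnd {s j : Fin 3} (h : j ≠ s) :
    j = Fin3.complFst s ∨ j = Fin3.complSnd s := by
  revert s j; decide

lemma resST_eq_res (d1 d2 : ℕ) (F1 F2 : MvPolynomial (Fin 3) ℂ) (s t : Fin 3) (z : ℂ) :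
    resST d1 d2 F1 F2 s t z = Res d1 d2
      (binaryCoeffs (Fin3.complFst s) (Fin3.complSnd s) d1 (aeval (scaleSubst s t z) F1))
      (binaryCoeffs (Fin3.complFst s) (Fin3.complSnd s) d2 (aeval (scaleSubst s t z) F2)) :=
  rfl

variable {d1 d2 : ℕ} {F1 F2 : MvPolynomial (Fin 3) ℂ} {s t : Fin 3}

lemma resST_eq_zero_of_common_zero (hd : 0 < d1 + d2)
    (hF1 : F1.IsHomogeneous d1) (hF2 : F2.IsHomogeneous d2) (hst : s ≠ t)
    {y : Fin 3 → ℂ} {z : ℂ} (hyt : y t ≠ 0) (hys : y s = z * y t)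
    (h1 : eval y F1 = 0) (h2 : eval y F2 = 0) : resST d1 d2 F1 F2 s t z = 0 := by
  have hform {F : MvPolynomial (Fin 3) ℂ} {d : ℕ} (hF : F.IsHomogeneous d) (hy : eval y F = 0) :
      binaryFormEval d (binaryCoeffs (Fin3.complFst s) (Fin3.complSnd s) d
        (aeval (scaleSubst s t z) F)) (y (Fin3.complFst s)) (y (Fin3.complSnd s)) = 0 := by
    rw [← (hF.aeval_scaleSubst z).eval_eq_binaryFormEval (Fin3.complFst_ne_complSnd s)
      fun i hi => Fin3.eq_complFst_or_eq_complSnd (ne_of_mem_vars_aeval_scaleSubst hst.symm z hi),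
      eval_aeval_scaleSubst hys, hy]
  have hy_ne : y (Fin3.complFst s) ≠ 0 ∨ y (Fin3.complSnd s) ≠ 0 := by
    rcases Fin3.eq_complFst_or_eq_complSnd hst.symm with h | h
    · exact .inl (h ▸ hyt)
    · exact .inr (h ▸ hyt)
  exact res_eq_zero_of_common_zero hd hy_ne (hform hF1 h1) (hform hF2 h2)

lemma exists_polynomial_eval_eq_resST (d1 d2 : ℕ) (F1 F2 : MvPolynomial (Fin 3) ℂ)
    (s t : Fin 3) :
    ∃ P : Polynomial ℂ, ∀ z, resST d1 d2 F1 F2 s t z = P.eval z := by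
  let coeffsX (d : ℕ) (F : MvPolynomial (Fin 3) ℂ) : ℕ → Polynomial ℂ :=
    binaryCoeffs (Fin3.complFst s) (Fin3.complSnd s) d
      (aeval (scaleSubst s t Polynomial.X) (map Polynomial.C F))
  refine ⟨Res d1 d2 (coeffsX d1 F1) (coeffsX d2 F2), fun z => ?_⟩
  rw [resST_eq_res, ← Polynomial.coe_evalRingHom, map_res]
  congr 1 <;> funext k <;>
    simp only [coeffsX, binaryCoeffs, Function.comp_apply, ← coeff_map,
      map_evalRingHom_aeval_scaleSubst]

end ResST

theorem stmt10_general (d1 d2 : ℕ) (h1 : 1 ≤ d1)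
    (F1 F2 : MvPolynomial (Fin 3) ℂ)
    (hF1 : F1.IsHomogeneous d1) (hF2 : F2.IsHomogeneous d2)
    (hinf : {p : Projectivization ℂ (Fin 3 → ℂ) |
        MvPolynomial.eval p.rep F1 = 0 ∧ MvPolynomial.eval p.rep F2 = 0}.Infinite) :
    ∃ s t : Fin 3, s ≠ t ∧ ∀ z : ℂ, resST d1 d2 F1 F2 s t z = 0 := by
  obtain ⟨s, t, hst, hratios⟩ := Projectivization.exists_infinite_coordinate_ratios hinf
  obtain ⟨P, hP⟩ := exists_polynomial_eval_eq_resST d1 d2 F1 F2 s t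
  have hP0 : P = 0 := by
    refine P.eq_zero_of_infinite_isRoot (hratios.mono ?_)
    rintro z ⟨p, ⟨hp1, hp2⟩, hpt, hps⟩
    exact (hP z).symm.trans
      (resST_eq_zero_of_common_zero (by omega) hF1 hF2 hst hpt hps hp1 hp2)
  exact ⟨s, t, hst, fun z => by rw [hP, hP0, Polynomial.eval_zero]⟩

/-- If the homogeneous ternary forms `F₁, F₂` of degrees `d₁, d₂ ≥ 1`
have infinitely many common zeros in the complex projective plane, then `Res^{s,t}`
vanishes identically (as a function of `z`) for some `s ≠ t`. -/
theorem stmt10 (d1 d2 : ℕ) (h1 : 1 ≤ d1) (h2 : 1 ≤ d2)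
    (F1 F2 : MvPolynomial (Fin 3) ℂ)
    (hF1 : F1.IsHomogeneous d1) (hF2 : F2.IsHomogeneous d2)
    (hinf : {p : Projectivization ℂ (Fin 3 → ℂ) |
        MvPolynomial.eval p.rep F1 = 0 ∧ MvPolynomial.eval p.rep F2 = 0}.Infinite) :
    ∃ s t : Fin 3, s ≠ t ∧ ∀ z : ℂ, resST d1 d2 F1 F2 s t z = 0 :=
  stmt10_general d1 d2 h1 F1 F2 hF1 hF2 hinf
end
end

section
/- Fix m ≥ 3 and n = 2, let q = x_1² + x_2², and define Δ_1(A) = Res(F_2, q) and Δ_2(A) = Res(F_1, q) (resultants of binary forms of degrees m−1 and 2). Then: (i) if A is irregular (i.e. there exists x ≠ 0 with Ax^{m-1} = 0 and x_1² + x_2² = 0), then Δ_1(A) = Δ_2(A) = 0; (ii) regarding the 2^m entries a_{i_1...i_m} as indeterminates over ℂ, Δ_1 and Δ_2 are nonzero polynomials that have no common non-constant factor in ℂ[a_{i_1...i_m}]. -/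
open Finset

noncomputable section

/-- Coefficient sequence of the binary quadratic form `q = x₁² + x₂²`. -/
def qCoeff {R : Type*} [CommRing R] (i : ℕ) : R := if i = 0 ∨ i = 2 then 1 else 0

/-! If `x ≠ 0` is a common zero of binary forms `f` and `g`, the vector of monomials
`(x₁^(N-1-j) x₂^j)_j` lies in the kernel of their Sylvester matrix, since each row applied to
it is a monomial multiple of `f(x)` or of `g(x)`; hence the resultant vanishes.

For generic entries, `Δ₁` involves only the indeterminates `a_{2 i₂…i_m}` and `Δ₂` only the
`a_{1 i₂…i_m}`: both are renamings of one universal resultant, which is nonzero since it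
specialises to `1` at `F = x₁^(m-1)`. Over a domain a divisor of a nonzero polynomial only
involves variables of that polynomial, so a common divisor of `Δ₁` and `Δ₂` is a nonzero
constant. -/

def binForm {R : Type*} [CommRing R] (d : ℕ) (f : ℕ → R) (x : Fin 2 → R) : R :=
  ∑ k ∈ range (d + 1), f k * x 0 ^ (d - k) * x 1 ^ k

section Forms
variable {R : Type*} [CommRing R]

lemma binForm_qCoeff (x : Fin 2 → R) : binForm 2 qCoeff x = x 0 ^ 2 + x 1 ^ 2 := by
  simp [binForm, qCoeff, sum_range_succ]

lemma prod_comp_fin_two {m1 : ℕ} (x : Fin 2 → R) (g : Fin m1 → Fin 2) :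
    ∏ j, x (g j) = x 0 ^ (m1 - #{k | g k = 1}) * x 1 ^ #{k | g k = 1} := by
  have hx : ∀ j, x (g j) = if g j = 1 then x 1 else x 0 := fun j => by
    split_ifs with h
    · rw [h]
    · rw [show g j = 0 by omega]
  have hcard : #{k | ¬g k = 1} = m1 - #{k | g k = 1} := by
    have := card_filter_add_card_filter_not (s := univ) (p := fun k => g k = 1)
    rw [card_univ, Fintype.card_fin] at this
    omega
  rw [prod_congr rfl fun j _ => hx j, prod_ite, prod_const, prod_const, hcard, mul_comm]

lemma tApply_eq_binForm {m1 : ℕ} (A : Fin 2 → (Fin m1 → Fin 2) → R) (x : Fin 2 → R)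
    (i0 : Fin 2) : tApply A x i0 = binForm m1 (bCoeff A i0) x := by
  have hmaps : ∀ g : Fin m1 → Fin 2, #{k | g k = 1} ∈ range (m1 + 1) := fun g =>
    mem_range_succ_iff.mpr ((card_filter_le _ _).trans_eq (card_fin m1))
  rw [tApply, ← sum_fiberwise_of_maps_to (fun g _ => hmaps g)]
  refine sum_congr rfl fun k _ => ?_
  rw [bCoeff, sum_mul, sum_mul]
  refine sum_congr rfl fun g hg => ?_
  rw [prod_comp_fin_two, (mem_filter.mp hg).2, mul_assoc]

lemma sum_window_mul_powers {N i d : ℕ} (h : i + d < N) (f : ℕ → R) (x : Fin 2 → R) :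
    ∑ j : Fin N, (if i ≤ j ∧ (j : ℕ) ≤ i + d then f (j - i) else 0) *
        (x 0 ^ (N - 1 - j) * x 1 ^ (j : ℕ))
      = x 0 ^ (N - 1 - (i + d)) * x 1 ^ i * binForm d f x := by
  have hwindow : (range N).filter (fun j => i ≤ j ∧ j ≤ i + d) = Ico i (i + d + 1) := by
    ext j; simp only [mem_filter, mem_range, mem_Ico]; omega
  simp only [ite_mul, zero_mul]
  rw [Fin.sum_univ_eq_sum_range (fun j => if i ≤ j ∧ j ≤ i + d then
      f (j - i) * (x 0 ^ (N - 1 - j) * x 1 ^ j) else 0), ← sum_filter, hwindow,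
    sum_Ico_eq_sum_range, add_assoc, Nat.add_sub_cancel_left, binForm, mul_sum]
  refine sum_congr rfl fun k hk => ?_
  have hexp : N - 1 - (i + k) = (N - 1 - (i + d)) + (d - k) := by
    have := mem_range.mp hk; omega
  rw [Nat.add_sub_cancel_left, hexp, pow_add, pow_add]
  ring

lemma Res_eq_zero_of_common_root [IsDomain R] {d e : ℕ} (hde : 0 < d + e) {f g : ℕ → R}
    {x : Fin 2 → R} (hx : x ≠ 0) (hf : binForm d f x = 0) (hg : binForm e g x = 0) :
    Res d e f g = 0 := by
  classical
  rw [Res, ← Matrix.exists_mulVec_eq_zero_iff]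
  refine ⟨fun j => x 0 ^ (d + e - 1 - j) * x 1 ^ (j : ℕ), fun hv => hx ?_, funext fun i => ?_⟩
  · have h0 := congrFun hv ⟨0, hde⟩
    have h1 := congrFun hv ⟨d + e - 1, by omega⟩
    simp only [Pi.zero_apply, Nat.sub_zero, pow_zero, mul_one, Nat.sub_self, one_mul] at h0 h1
    ext i; fin_cases i
    exacts [pow_eq_zero_iff'.mp h0 |>.1, pow_eq_zero_iff'.mp h1 |>.1]
  · simp only [Matrix.mulVec, dotProduct, sylM, Pi.zero_apply]
    split_ifs with hi
    · rw [sum_window_mul_powers (by omega), hf, mul_zero]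
    · rw [sum_window_mul_powers (by omega), hg, mul_zero]

end Forms

open MvPolynomial

section Maps
variable {R S : Type*} [CommRing R] [CommRing S]

lemma Res_map (h : R →+* S) (d e : ℕ) (f g : ℕ → R) :
    h (Res d e f g) = Res d e (h ∘ f) (h ∘ g) := by
  rw [Res, Res, RingHom.map_det, RingHom.mapMatrix_apply]
  congr 1
  ext i j
  simp only [sylM, Matrix.map_apply, apply_ite h, map_zero, Function.comp_apply]

lemma comp_qCoeff (h : R →+* S) : h ∘ qCoeff = qCoeff := by
  funext k
  simp only [qCoeff, Function.comp_apply, apply_ite h, map_one, map_zero]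

lemma comp_bCoeff (h : R →+* S) {m1 : ℕ} (A : Fin 2 → (Fin m1 → Fin 2) → R) (i0 : Fin 2) :
    h ∘ bCoeff A i0 = bCoeff (fun i g => h (A i g)) i0 := by
  funext k
  simp only [bCoeff, Function.comp_apply, map_sum]

lemma Res_bCoeff_qCoeff_map (h : R →+* S) {m1 : ℕ} (A : Fin 2 → (Fin m1 → Fin 2) → R)
    (i0 : Fin 2) :
    h (Res m1 2 (bCoeff A i0) qCoeff) = Res m1 2 (bCoeff (fun i g => h (A i g)) i0) qCoeff := by
  rw [Res_map, comp_bCoeff, comp_qCoeff]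

end Maps

section Coefficients
variable {R : Type*} [CommRing R]

lemma bCoeff_congr {m1 : ℕ} {A B : Fin 2 → (Fin m1 → Fin 2) → R} {i0 i1 : Fin 2}
    (hAB : ∀ g, A i0 g = B i1 g) : bCoeff A i0 = bCoeff B i1 :=
  funext fun _ => sum_congr rfl fun g _ => hAB g

lemma bCoeff_indicator_zero {m1 : ℕ} (i0 : Fin 2) :
    bCoeff (fun _ (g : Fin m1 → Fin 2) => if g = 0 then (1 : R) else 0) i0 =
      fun k => if k = 0 then 1 else 0 := by
  funext k
  rw [bCoeff, sum_ite_eq' _ 0]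
  by_cases hk : k = 0 <;> simp [hk, eq_comm]

lemma Res_indicator_zero {d e : ℕ} {g : ℕ → R} (hg : g e = 1) :
    Res d e (fun k => if k = 0 then 1 else 0) g = 1 := by
  rw [Res, Matrix.det_of_isLowerTriangular]
  · refine prod_eq_one fun i _ => ?_
    by_cases hi : (i : ℕ) < e
    · simp [sylM, hi]
    · rw [sylM, if_neg hi, if_pos ⟨Nat.sub_le _ _, by omega⟩,
        show (i : ℕ) - (i - e) = e by omega, hg]
  · intro i j hij
    have hij : (i : ℕ) < j := OrderDual.toDual_lt_toDual.mp hij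
    by_cases hi : (i : ℕ) < e
    · simp [sylM, hi, show (j : ℕ) - i ≠ 0 by omega]
    · rw [sylM, if_neg hi, if_neg (by omega)]

end Coefficients

lemma MvPolynomial.vars_subset_of_dvd {σ R : Type*} [CommRing R] [IsDomain R]
    {p f : MvPolynomial σ R} (hf : f ≠ 0) (hpf : p ∣ f) : p.vars ⊆ f.vars := by
  obtain ⟨q, rfl⟩ := hpf
  intro i hi
  rw [mem_vars_iff_degreeOf_ne_zero] at hi ⊢
  rw [degreeOf_mul_eq (left_ne_zero_of_mul hf) (right_ne_zero_of_mul hf)]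
  omega

lemma MvPolynomial.isUnit_of_dvd_of_disjoint_vars {σ K : Type*} [Field K]
    {p f g : MvPolynomial σ K} (hf : f ≠ 0) (hg : g ≠ 0) (hfg : Disjoint f.vars g.vars)
    (hpf : p ∣ f) (hpg : p ∣ g) : IsUnit p := by
  have hvars : p.vars = ∅ :=
    subset_empty.mp (hfg (vars_subset_of_dvd hf hpf) (vars_subset_of_dvd hg hpg))
  have hp : p.coeff 0 ≠ 0 := by
    intro h0
    rw [vars_eq_empty_iff_eq_C, h0, C_0] at hvars
    exact hf (zero_dvd_iff.mp (hvars ▸ hpf))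
  rw [vars_eq_empty_iff_eq_C.mp hvars]
  exact hp.isUnit.map C

section Generic
variable (K : Type*) [Field K] (m1 : ℕ)

def genericRes : MvPolynomial (Fin m1 → Fin 2) K :=
  Res m1 2 (bCoeff (fun _ g => X g) 0) qCoeff

lemma genericRes_ne_zero : genericRes K m1 ≠ 0 := by
  intro h0
  have h1 := congrArg (eval fun g => if g = 0 then (1 : K) else 0) h0
  rw [genericRes, Res_bCoeff_qCoeff_map, map_zero] at h1
  simp only [eval_X] at h1
  rw [bCoeff_indicator_zero, Res_indicator_zero (by simp [qCoeff])] at h1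
  exact one_ne_zero h1

variable {K m1}

lemma Res_bCoeff_X_eq_rename (i0 : Fin 2) :
    Res m1 2 (bCoeff (fun i g => (X (i, g) : MvPolynomial (Fin 2 × (Fin m1 → Fin 2)) K)) i0)
      qCoeff = rename (Prod.mk i0) (genericRes K m1) := by
  rw [genericRes, ← AlgHom.coe_toRingHom, Res_bCoeff_qCoeff_map]
  exact congrArg (Res m1 2 · qCoeff) (bCoeff_congr fun g => by simp)

lemma Res_bCoeff_X_ne_zero (i0 : Fin 2) :
    Res m1 2 (bCoeff (fun i g => (X (i, g) : MvPolynomial (Fin 2 × (Fin m1 → Fin 2)) K)) i0)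
      qCoeff ≠ 0 := by
  rw [Res_bCoeff_X_eq_rename]
  exact (map_ne_zero_iff _ (rename_injective _ (Prod.mk_right_injective i0))).mpr
    (genericRes_ne_zero K m1)

lemma fst_eq_of_mem_vars_Res_bCoeff_X {i0 : Fin 2} {v : Fin 2 × (Fin m1 → Fin 2)}
    (hv : v ∈ (Res m1 2 (bCoeff (fun i g => (X (i, g) : MvPolynomial _ K)) i0) qCoeff).vars) :
    v.1 = i0 := by
  classical
  rw [Res_bCoeff_X_eq_rename] at hv
  obtain ⟨g, -, rfl⟩ := mem_image.mp (vars_rename _ _ hv)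
  rfl

end Generic

theorem stmt11_general {m : ℕ} :
    (∀ A : Fin 2 → (Fin (m - 1) → Fin 2) → ℂ,
      (∃ x : Fin 2 → ℂ, x ≠ 0 ∧ (∀ i, tApply A x i = 0) ∧ x 0 ^ 2 + x 1 ^ 2 = 0) →
        Res (m - 1) 2 (bCoeff A 1) qCoeff = 0 ∧ Res (m - 1) 2 (bCoeff A 0) qCoeff = 0) ∧
    (∀ Agen : Fin 2 → (Fin (m - 1) → Fin 2) → MvPolynomial (Fin 2 × (Fin (m - 1) → Fin 2)) ℂ,
      (∀ i g, Agen i g = MvPolynomial.X (i, g)) →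
        Res (m - 1) 2 (bCoeff Agen 1) qCoeff ≠ 0 ∧
        Res (m - 1) 2 (bCoeff Agen 0) qCoeff ≠ 0 ∧
        ∀ p : MvPolynomial (Fin 2 × (Fin (m - 1) → Fin 2)) ℂ,
          p ∣ Res (m - 1) 2 (bCoeff Agen 1) qCoeff →
          p ∣ Res (m - 1) 2 (bCoeff Agen 0) qCoeff → IsUnit p) := by
  refine ⟨fun A ⟨x, hx, hAx, hq⟩ => ?_, fun Agen hA => ?_⟩
  · have hres : ∀ i0, Res (m - 1) 2 (bCoeff A i0) qCoeff = 0 := fun i0 =>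
      Res_eq_zero_of_common_root (by omega) hx (tApply_eq_binForm A x i0 ▸ hAx i0)
        (binForm_qCoeff x ▸ hq)
    exact ⟨hres 1, hres 0⟩
  · obtain rfl : Agen = fun i g => X (i, g) := funext₂ hA
    refine ⟨Res_bCoeff_X_ne_zero 1, Res_bCoeff_X_ne_zero 0, fun p h1 h0 => ?_⟩
    refine isUnit_of_dvd_of_disjoint_vars (Res_bCoeff_X_ne_zero 1) (Res_bCoeff_X_ne_zero 0)
      (disjoint_left.mpr fun v hv1 hv0 => ?_) h1 h0
    exact absurd ((fst_eq_of_mem_vars_Res_bCoeff_X hv1).symm.trans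
      (fst_eq_of_mem_vars_Res_bCoeff_X hv0)) (by decide)

/-- For `m ≥ 3`, `n = 2`, with `Δ₁(A) = Res(F₂, q)` and
`Δ₂(A) = Res(F₁, q)` (`q = x₁² + x₂²`):
(i) if `A` is irregular then `Δ₁(A) = Δ₂(A) = 0`;
(ii) for the generic tensor (entries as indeterminates over `ℂ`), `Δ₁` and `Δ₂` are
nonzero polynomials with no common non-constant factor. -/
theorem stmt11 {m : ℕ} (hm : 3 ≤ m) :
    (∀ A : Fin 2 → (Fin (m - 1) → Fin 2) → ℂ,
      (∃ x : Fin 2 → ℂ, x ≠ 0 ∧ (∀ i, tApply A x i = 0) ∧ x 0 ^ 2 + x 1 ^ 2 = 0) →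
        Res (m - 1) 2 (bCoeff A 1) qCoeff = 0 ∧ Res (m - 1) 2 (bCoeff A 0) qCoeff = 0) ∧
    (∀ Agen : Fin 2 → (Fin (m - 1) → Fin 2) → MvPolynomial (Fin 2 × (Fin (m - 1) → Fin 2)) ℂ,
      (∀ i g, Agen i g = MvPolynomial.X (i, g)) →
        Res (m - 1) 2 (bCoeff Agen 1) qCoeff ≠ 0 ∧
        Res (m - 1) 2 (bCoeff Agen 0) qCoeff ≠ 0 ∧
        ∀ p : MvPolynomial (Fin 2 × (Fin (m - 1) → Fin 2)) ℂ,
          p ∣ Res (m - 1) 2 (bCoeff Agen 1) qCoeff →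
          p ∣ Res (m - 1) 2 (bCoeff Agen 0) qCoeff → IsUnit p) :=
  stmt11_general
end
end

section
/- Let m ≥ 3 and let A be a regular mth order 2-dimensional complex tensor. Then there exist λ ∈ ℂ and x ∈ ℂ² with x ≠ 0 such that Ax^{m-1} = λx and x_1² + x_2² = 0 if and only if P_m² + Q_m² = 0. -/
open Finset

noncomputable section

/-- `P_m = b₁ - c₂ - b₃ + c₄ + b₅ - c₆ - ⋯` (signs cyclic with period four). -/
def Pm (m : ℕ) (A : Fin 2 → (Fin (m - 1) → Fin 2) → ℂ) : ℂ :=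
  ∑ i ∈ Finset.Icc 1 m,
    if i % 4 = 1 then bCoeff A 0 (i - 1)
    else if i % 4 = 2 then -bCoeff A 1 (i - 1)
    else if i % 4 = 3 then -bCoeff A 0 (i - 1)
    else bCoeff A 1 (i - 1)

/-- `Q_m = c₁ + b₂ - c₃ - b₄ + c₅ + b₆ - ⋯` (signs cyclic with period four). -/
def Qm (m : ℕ) (A : Fin 2 → (Fin (m - 1) → Fin 2) → ℂ) : ℂ :=
  ∑ i ∈ Finset.Icc 1 m,
    if i % 4 = 1 then bCoeff A 1 (i - 1)
    else if i % 4 = 2 then bCoeff A 0 (i - 1)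
    else if i % 4 = 3 then -bCoeff A 1 (i - 1)
    else -bCoeff A 0 (i - 1)

/-! The vectors with `x₁² + x₂² = 0` are the multiples of `(1, i)` and `(1, -i)`. On `(1, z)` the
eigen-equation `A x^{m-1} = λ x` reduces to `F₂(1, z) = z F₁(1, z)` for the binary forms
`Fₖ = (A x^{m-1})ₖ`, and for `z² = -1` the periodicity `z⁴ = 1` makes `F₂(1, z) - z F₁(1, z)`
collapse to `Q_m - z P_m`. Hence a solution exists iff `Q_m ∓ i P_m = 0` for some sign, i.e. iff
`P_m² + Q_m² = (Q_m - i P_m)(Q_m + i P_m) = 0`. -/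

lemma tApply_smul {R : Type*} [CommRing R] {m1 n : ℕ} (A : Fin n → (Fin m1 → Fin n) → R)
    (c : R) (x : Fin n → R) (i : Fin n) : tApply A (c • x) i = c ^ m1 * tApply A x i := by
  simp only [tApply, Finset.mul_sum, Pi.smul_apply, smul_eq_mul, Finset.prod_mul_distrib,
    Finset.prod_const, Finset.card_univ, Fintype.card_fin]
  exact Finset.sum_congr rfl fun g _ => by ring

lemma prod_vecCons_one_comp {R : Type*} [CommRing R] {m1 : ℕ} (z : R) (g : Fin m1 → Fin 2) :
    ∏ j, ![1, z] (g j) = z ^ (univ.filter fun k => g k = 1).card := by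
  rw [Finset.card_filter, ← Finset.prod_pow_eq_pow_sum]
  refine Finset.prod_congr rfl fun j _ => ?_
  rcases Fin.exists_fin_two.mp ⟨g j, rfl⟩ with h | h <;> simp [h]

lemma tApply_vecCons_one {R : Type*} [CommRing R] {m1 : ℕ} (A : Fin 2 → (Fin m1 → Fin 2) → R)
    (z : R) (i0 : Fin 2) :
    tApply A ![1, z] i0 = ∑ i ∈ Finset.range (m1 + 1), bCoeff A i0 i * z ^ i := by
  have hmaps : ∀ g ∈ (univ : Finset (Fin m1 → Fin 2)),
      (univ.filter fun k => g k = 1).card ∈ Finset.range (m1 + 1) := fun g _ =>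
    Finset.mem_range_succ_iff.mpr ((Finset.card_filter_le _ _).trans (by simp))
  simp only [tApply, prod_vecCons_one_comp, ← Finset.sum_fiberwise_of_maps_to hmaps, bCoeff,
    Finset.sum_mul]
  refine Finset.sum_congr rfl fun i _ => Finset.sum_congr rfl fun g hg => ?_
  rw [(Finset.mem_filter.mp hg).2]

lemma eq_smul_vecCons_one_of_sq_add_sq_eq_zero {K : Type*} [Field K] {x : Fin 2 → K}
    (hx : x ≠ 0) (hsq : x 0 ^ 2 + x 1 ^ 2 = 0) :
    x 0 ≠ 0 ∧ (x 1 / x 0) ^ 2 = -1 ∧ x = x 0 • ![1, x 1 / x 0] := by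
  have hx0 : x 0 ≠ 0 := by
    intro h0
    have h1 : x 1 = 0 := by simpa [h0] using hsq
    exact hx (funext fun i => by fin_cases i <;> assumption)
  refine ⟨hx0, ?_, funext fun i => ?_⟩
  · rw [div_pow, div_eq_iff (pow_ne_zero 2 hx0)]
    linear_combination hsq
  · fin_cases i
    · simp
    · simp [mul_div_cancel₀ _ hx0]

lemma exists_eigen_sq_add_sq_eq_zero_iff {K : Type*} [Field K] {m1 : ℕ}
    (A : Fin 2 → (Fin m1 → Fin 2) → K) :
    (∃ (lam : K) (x : Fin 2 → K), x ≠ 0 ∧ (∀ i, tApply A x i = lam * x i) ∧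
        x 0 ^ 2 + x 1 ^ 2 = 0) ↔
      ∃ z : K, z ^ 2 = -1 ∧ tApply A ![1, z] 1 = z * tApply A ![1, z] 0 := by
  constructor
  · rintro ⟨lam, x, hx, heig, hsq⟩
    obtain ⟨hx0, hz, hxz⟩ := eq_smul_vecCons_one_of_sq_add_sq_eq_zero hx hsq
    set z := x 1 / x 0
    have heig' : ∀ i, x 0 ^ m1 * tApply A ![1, z] i = lam * x 0 * ![1, z] i := fun i => by
      rw [← tApply_smul, ← hxz, heig i, hxz]; simp [mul_assoc]
    have h0 := heig' 0
    have h1 := heig' 1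
    simp only [Matrix.cons_val_zero, Matrix.cons_val_one, mul_one] at h0 h1
    refine ⟨z, hz, mul_left_cancel₀ (pow_ne_zero m1 hx0) ?_⟩
    linear_combination h1 - z * h0
  · rintro ⟨z, hz, hF⟩
    refine ⟨tApply A ![1, z] 0, ![1, z], fun h => by simpa using congrFun h 0,
      fun i => ?_, by simp [hz]⟩
    fin_cases i
    · simp
    · simpa [mul_comm] using hF

lemma sum_range_sub_mul_pow_eq_Qm_sub_mul_Pm {m : ℕ} (A : Fin 2 → (Fin (m - 1) → Fin 2) → ℂ)
    {z : ℂ} (hz : z ^ 2 = -1) :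
    ∑ j ∈ Finset.range m, (bCoeff A 1 j - z * bCoeff A 0 j) * z ^ j = Qm m A - z * Pm m A := by
  have hz4 : z ^ 4 = 1 := by rw [show 4 = 2 * 2 from rfl, pow_mul, hz]; norm_num
  have hz3 : z ^ 3 = -z := by rw [pow_succ, hz]; ring
  rw [Qm, Pm, ← Finset.Ico_add_one_right_eq_Icc, Finset.sum_Ico_eq_sum_range,
    Finset.sum_Ico_eq_sum_range, Nat.add_sub_cancel, Finset.mul_sum, ← Finset.sum_sub_distrib]
  refine Finset.sum_congr rfl fun k _ => ?_
  rw [Nat.add_sub_cancel_left, pow_eq_pow_mod k hz4]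
  rcases show k % 4 = 0 ∨ k % 4 = 1 ∨ k % 4 = 2 ∨ k % 4 = 3 by omega with h | h | h | h
  · rw [h, show (1 + k) % 4 = 1 by omega]; simp
  · rw [h, show (1 + k) % 4 = 2 by omega]; simp only [pow_one]; norm_num
    linear_combination (-bCoeff A 0 k) * hz
  · rw [h, show (1 + k) % 4 = 3 by omega, hz]; norm_num; ring
  · rw [h, show (1 + k) % 4 = 0 by omega, hz3]; norm_num
    linear_combination bCoeff A 0 k * hz

lemma tApply_one_sub_mul_tApply_zero {m : ℕ} (hm : 1 ≤ m)
    (A : Fin 2 → (Fin (m - 1) → Fin 2) → ℂ) {z : ℂ} (hz : z ^ 2 = -1) :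
    tApply A ![1, z] 1 - z * tApply A ![1, z] 0 = Qm m A - z * Pm m A := by
  rw [tApply_vecCons_one, tApply_vecCons_one, Nat.sub_add_cancel hm,
    ← sum_range_sub_mul_pow_eq_Qm_sub_mul_Pm A hz, Finset.mul_sum, ← Finset.sum_sub_distrib]
  exact Finset.sum_congr rfl fun j _ => by ring

lemma sq_add_sq_eq_zero_iff_exists {P Q : ℂ} :
    P ^ 2 + Q ^ 2 = 0 ↔ ∃ z : ℂ, z ^ 2 = -1 ∧ Q - z * P = 0 := by
  constructor
  · intro h
    have hfac : (Q - Complex.I * P) * (Q - -Complex.I * P) = 0 := by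
      linear_combination h - P ^ 2 * Complex.I_sq
    rcases mul_eq_zero.mp hfac with h0 | h0
    · exact ⟨Complex.I, Complex.I_sq, h0⟩
    · exact ⟨-Complex.I, by simp, h0⟩
  · rintro ⟨z, hz, h⟩
    linear_combination (Q + z * P) * h + P ^ 2 * hz

theorem stmt13_general {m : ℕ} (hm : 3 ≤ m)
    (A : Fin 2 → (Fin (m - 1) → Fin 2) → ℂ) :
    (∃ (lam : ℂ) (x : Fin 2 → ℂ), x ≠ 0 ∧ (∀ i, tApply A x i = lam * x i) ∧
        x 0 ^ 2 + x 1 ^ 2 = 0) ↔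
      Pm m A ^ 2 + Qm m A ^ 2 = 0 := by
  rw [exists_eigen_sq_add_sq_eq_zero_iff, sq_add_sq_eq_zero_iff_exists]
  refine exists_congr fun z => and_congr_right fun hz => ?_
  rw [← tApply_one_sub_mul_tApply_zero (by omega) A hz, sub_eq_zero]

/-- For `m ≥ 3` and a regular `m`th order 2-dimensional complex tensor
`A`, the deficit system `A x^{m-1} = λ x`, `x₁² + x₂² = 0` has a nontrivial solution iff
`P_m² + Q_m² = 0`. -/
theorem stmt13 {m : ℕ} (hm : 3 ≤ m)
    (A : Fin 2 → (Fin (m - 1) → Fin 2) → ℂ) (hA : Regular A) :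
    (∃ (lam : ℂ) (x : Fin 2 → ℂ), x ≠ 0 ∧ (∀ i, tApply A x i = lam * x i) ∧
        x 0 ^ 2 + x 1 ^ 2 = 0) ↔
      Pm m A ^ 2 + Qm m A ^ 2 = 0 :=
  stmt13_general hm A
end
end
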